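/- arXiv:0808.0739 — 8 statements merged into one kernel-verified Lean document; each statement's English description precedes it below -/
import Mathlib

section
/- If 𝓗 is a finite hypergraph in which every vertex avoids at least one hyperedge, then Θ(𝓗*) is homotopy equivalent to Θ(𝓗). -/
/-- A hypergraph on vertex type `V` is given by its set `H` of hyperedges
(subsets of `V`).  The theta complex `Θ(𝓗)` has as simplices the nonempty
finite subsets of `V` that are disjoint from at least one hyperedge. -/
def thetaComplex {V : Type*} (H : Set (Set V)) : Set (Finset V) :=
  {σ : Finset V | σ.Nonempty ∧ ∃ h ∈ H, ∀ v ∈ σ, v ∉ h}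

/-- The geometric realization of a complex `K` of finite subsets of `V`:
convex combinations of vertices supported on a simplex of `K`, topologized as a
subspace of `V → ℝ`. -/
def geomReal {V : Type*} (K : Set (Finset V)) : Set (V → ℝ) :=
  {f | (∀ v, 0 ≤ f v) ∧ ∃ σ ∈ K, (∀ v, f v ≠ 0 → v ∈ σ) ∧ ∑ v ∈ σ, f v = 1}

/-- The dual hypergraph `𝓗*`: its vertices are the hyperedges of `𝓗`, and it
has one hyperedge `h_v = {h ∈ H | v ∈ h}` for each vertex `v` of `𝓗`. -/
def dualEdges {V : Type*} (H : Set (Set V)) : Set (Set ↥H) :=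
  Set.range (fun v : V => {h : ↥H | v ∈ (h : Set V)})

/-!
Both theta complexes are Dowker complexes of the relation `v ∉ h` between vertices and
hyperedges, so the theorem is Dowker duality. Write a point `y` of a realization as
`∑ S, gap y S • 𝟙 S` over its superlevel sets `S`; replacing each `S` by its polar (the partners
common to all of `S`) and renormalizing gives a continuous map into the dual realization.
Superlevel sets contain the maximizers of `y` and lie in every simplex `σ` carrying `y`, so the
image of `y` is carried by the polar of the maximizers, a simplex, and is maximal on `polar σ`.
Applying this twice, the composite of the map and the map back sends `y` into the simplex
`polar (polar σ) ⊇ σ`, so the straight-line homotopy from the identity to the composite stays in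
the realization.
-/

noncomputable section

open Finset
open scoped Classical

namespace Dowker

variable {A B : Type*}

theorem continuous_fold_max (s : Finset A) : Continuous fun y : A → ℝ => s.fold max 0 y := by
  induction s using Finset.induction_on with
  | empty => exact continuous_const
  | insert a s ha ih =>
    simp only [fold_insert ha]
    exact (continuous_apply a).max ih

section Realization

variable [Fintype A] {K : Set (Finset A)} {y : A → ℝ}

theorem mem_geomReal_iff :
    y ∈ geomReal K ↔
      (∀ a, 0 ≤ y a) ∧ (∃ σ ∈ K, ∀ a, y a ≠ 0 → a ∈ σ) ∧ ∑ a, y a = 1 := by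
  refine and_congr_right fun _ => ⟨fun ⟨σ, hσ, hsupp, hsum⟩ => ⟨⟨σ, hσ, hsupp⟩, ?_⟩,
    fun ⟨⟨σ, hσ, hsupp⟩, hsum⟩ => ⟨σ, hσ, hsupp, ?_⟩⟩ <;>
  rwa [sum_subset (subset_univ σ) fun a _ ha => not_imp_comm.1 (hsupp a) ha] at *

theorem exists_pos_of_mem_geomReal (hy : y ∈ geomReal K) : ∃ a, 0 < y a := by
  obtain ⟨hy0, -, hsum⟩ := mem_geomReal_iff.1 hy
  obtain ⟨a, -, ha⟩ := exists_ne_zero_of_sum_ne_zero (hsum ▸ one_ne_zero)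
  exact ⟨a, (hy0 a).lt_of_ne' ha⟩

theorem smul_add_smul_mem_geomReal {y₀ y₁ : A → ℝ} {σ : Finset A} (h₀ : y₀ ∈ geomReal K)
    (h₁ : y₁ ∈ geomReal K) (hσ : σ ∈ K) (hs₀ : ∀ a, y₀ a ≠ 0 → a ∈ σ)
    (hs₁ : ∀ a, y₁ a ≠ 0 → a ∈ σ) {t : ℝ} (ht₀ : 0 ≤ t) (ht₁ : t ≤ 1) :
    (1 - t) • y₀ + t • y₁ ∈ geomReal K := by
  obtain ⟨hy₀, -, hsum₀⟩ := mem_geomReal_iff.1 h₀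
  obtain ⟨hy₁, -, hsum₁⟩ := mem_geomReal_iff.1 h₁
  refine mem_geomReal_iff.2 ⟨fun a => ?_, ⟨σ, hσ, fun a ha => ?_⟩, ?_⟩
  · have := hy₀ a
    have := hy₁ a
    simp only [Pi.add_apply, Pi.smul_apply, smul_eq_mul]
    positivity
  · by_contra haσ
    simp [not_imp_comm.1 (hs₀ a) haσ, not_imp_comm.1 (hs₁ a) haσ] at ha
  · simp only [Pi.add_apply, Pi.smul_apply, smul_eq_mul, sum_add_distrib, ← mul_sum, hsum₀,
      hsum₁]
    ring

theorem homotopic_of_forall_exists_simplex {X : Type*} [TopologicalSpace X]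
    {f₀ f₁ : C(X, geomReal K)}
    (h : ∀ x, ∃ σ ∈ K, (∀ a, (f₀ x : A → ℝ) a ≠ 0 → a ∈ σ) ∧
      ∀ a, (f₁ x : A → ℝ) a ≠ 0 → a ∈ σ) :
    f₀.Homotopic f₁ := by
  choose σ hσ hs₀ hs₁ using h
  exact ⟨{
    toFun p := ⟨(1 - (p.1 : ℝ)) • (f₀ p.2 : A → ℝ) + (p.1 : ℝ) • (f₁ p.2 : A → ℝ),
      smul_add_smul_mem_geomReal (f₀ p.2).2 (f₁ p.2).2 (hσ p.2) (hs₀ p.2) (hs₁ p.2)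
        p.1.2.1 p.1.2.2⟩
    continuous_toFun := by fun_prop
    map_zero_left x := by ext; simp
    map_one_left x := by ext; simp }⟩

end Realization

section Gap

variable [Fintype A] {y : A → ℝ} {S σ : Finset A} {a : A}

/-- `y = ∑ S, gap y S • 𝟙 S`: the coordinates of `y` in the barycentric subdivision. -/
def gap (y : A → ℝ) (S : Finset A) : ℝ :=
  if hS : S.Nonempty then max (S.inf' hS y - Sᶜ.fold max 0 y) 0 else 0

theorem gap_nonneg (y : A → ℝ) (S : Finset A) : 0 ≤ gap y S := by
  unfold gap
  split_ifs
  exacts [le_max_right _ _, le_rfl]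

theorem gap_pos_iff :
    0 < gap y S ↔ S.Nonempty ∧ ∀ a ∈ S, 0 < y a ∧ ∀ b ∉ S, y b < y a := by
  unfold gap
  split_ifs with hS
  · simp [hS, fold_max_lt]
  · simp [hS]

theorem continuous_gap (S : Finset A) : Continuous fun y : A → ℝ => gap y S := by
  unfold gap
  split_ifs with hS
  · exact ((Continuous.finset_inf'_apply hS fun a _ => continuous_apply a).sub
      (continuous_fold_max _)).max continuous_const
  · exact continuous_const

theorem subset_of_gap_pos (hσ : ∀ a, y a ≠ 0 → a ∈ σ) (hS : 0 < gap y S) : S ⊆ σ :=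
  fun a ha => hσ a ((gap_pos_iff.1 hS).2 a ha).1.ne'

def argmaxSet (y : A → ℝ) : Finset A := {a | ∀ b, y b ≤ y a}

theorem argmaxSet_subset_of_gap_pos (hS : 0 < gap y S) : argmaxSet y ⊆ S := by
  intro a ha
  obtain ⟨⟨c, hc⟩, hsep⟩ := gap_pos_iff.1 hS
  by_contra haS
  exact ((mem_filter.1 ha).2 c).not_gt ((hsep c hc).2 a haS)

theorem argmaxSet_nonempty (h : ∃ a, 0 < y a) : (argmaxSet y).Nonempty := by
  obtain ⟨a, -⟩ := h
  obtain ⟨b, -, hb⟩ := exists_max_image univ y ⟨a, mem_univ a⟩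
  exact ⟨b, mem_filter.2 ⟨mem_univ b, fun c => hb c (mem_univ c)⟩⟩

theorem gap_argmaxSet_pos (h : ∃ a, 0 < y a) : 0 < gap y (argmaxSet y) := by
  refine gap_pos_iff.2 ⟨argmaxSet_nonempty h, fun a ha => ⟨?_, fun b hb => ?_⟩⟩
  · obtain ⟨c, hc⟩ := h
    exact hc.trans_le ((mem_filter.1 ha).2 c)
  · simp only [argmaxSet, mem_filter, mem_univ, true_and, not_forall, not_le] at hb
    obtain ⟨c, hc⟩ := hb
    exact hc.trans_le ((mem_filter.1 ha).2 c)

end Gap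

section Complex

variable (R : A → B → Prop)

def dowkerComplex : Set (Finset A) := {σ | σ.Nonempty ∧ ∃ b, ∀ a ∈ σ, R a b}

variable {R} in
theorem mem_dowkerComplex_of_subset {σ τ : Finset A} (hσ : σ ∈ dowkerComplex R) (hτσ : τ ⊆ σ)
    (hτ : τ.Nonempty) : τ ∈ dowkerComplex R :=
  ⟨hτ, hσ.2.imp fun _ hb a ha => hb a (hτσ ha)⟩

variable [Fintype B]

def polar (S : Finset A) : Finset B := {b | ∀ a ∈ S, R a b}

variable {R} in
theorem mem_polar {S : Finset A} {b : B} : b ∈ polar R S ↔ ∀ a ∈ S, R a b := by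
  simp [polar]

theorem polar_anti : Antitone (polar R) :=
  fun _ _ hST _ hb => mem_polar.2 fun a ha => mem_polar.1 hb a (hST ha)

theorem polar_mem_dowkerComplex {S : Finset A} (hS : S ∈ dowkerComplex R) :
    polar R S ∈ dowkerComplex (flip R) := by
  obtain ⟨⟨a, ha⟩, b, hb⟩ := hS
  exact ⟨⟨b, mem_polar.2 hb⟩, a, fun c hc => mem_polar.1 hc a ha⟩

theorem subset_polar_polar [Fintype A] (S : Finset A) : S ⊆ polar (flip R) (polar R S) :=
  fun a ha => mem_polar.2 fun _ hb => mem_polar.1 hb a ha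

end Complex

section Map

variable [Fintype A] [Fintype B] (R : A → B → Prop) {y : A → ℝ} {σ : Finset A}

def weight (y : A → ℝ) (b : B) : ℝ := ∑ S with b ∈ polar R S, gap y S

def dowkerMap (y : A → ℝ) : B → ℝ := (∑ b, weight R y b)⁻¹ • weight R y

theorem weight_nonneg (y : A → ℝ) (b : B) : 0 ≤ weight R y b :=
  sum_nonneg fun S _ => gap_nonneg y S

theorem continuous_weight : Continuous (weight R : (A → ℝ) → B → ℝ) :=
  continuous_pi fun _ => continuous_finsetSum _ fun S _ => continuous_gap S

variable {R}

theorem mem_polar_argmaxSet_of_weight_ne_zero {b : B} (hb : weight R y b ≠ 0) :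
    b ∈ polar R (argmaxSet y) := by
  obtain ⟨S, hS, hgap⟩ := exists_ne_zero_of_sum_ne_zero hb
  exact polar_anti R (argmaxSet_subset_of_gap_pos ((gap_nonneg y S).lt_of_ne' hgap))
    (mem_filter.1 hS).2

theorem weight_le_of_mem_polar (hσ : ∀ a, y a ≠ 0 → a ∈ σ) {b : B} (hb : b ∈ polar R σ)
    (b' : B) : weight R y b' ≤ weight R y b := by
  have hall : weight R y b = ∑ S, gap y S := sum_filter_of_ne fun S _ hS =>
    polar_anti R (subset_of_gap_pos hσ ((gap_nonneg y S).lt_of_ne' hS)) hb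
  rw [hall]
  exact sum_le_sum_of_subset_of_nonneg (filter_subset _ _) fun S _ _ => gap_nonneg y S

theorem sum_weight_pos (hy : y ∈ geomReal (dowkerComplex R)) : 0 < ∑ b, weight R y b := by
  have hpos := gap_argmaxSet_pos (exists_pos_of_mem_geomReal hy)
  obtain ⟨-, σ, ⟨-, b, hb⟩, hσ, -⟩ := hy
  have hb : b ∈ polar R (argmaxSet y) :=
    polar_anti R (subset_of_gap_pos hσ hpos) (mem_polar.2 hb)
  calc 0 < gap y (argmaxSet y) := hpos
    _ ≤ weight R y b := single_le_sum (fun S _ => gap_nonneg y S) (mem_filter.2 ⟨mem_univ _, hb⟩)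
    _ ≤ ∑ b, weight R y b := single_le_sum (fun b _ => weight_nonneg R y b) (mem_univ b)

theorem dowkerMap_mem_geomReal (hy : y ∈ geomReal (dowkerComplex R)) :
    dowkerMap R y ∈ geomReal (dowkerComplex (flip R)) := by
  have hsum := sum_weight_pos hy
  have hmax : argmaxSet y ∈ dowkerComplex R := by
    have hpos := exists_pos_of_mem_geomReal hy
    obtain ⟨-, σ, hσK, hσ, -⟩ := hy
    exact mem_dowkerComplex_of_subset hσK (subset_of_gap_pos hσ (gap_argmaxSet_pos hpos))
      (argmaxSet_nonempty hpos)
  refine mem_geomReal_iff.2 ⟨fun b => ?_, ⟨_, polar_mem_dowkerComplex R hmax, fun b hb => ?_⟩, ?_⟩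
  · exact mul_nonneg (inv_nonneg.2 hsum.le) (weight_nonneg R y b)
  · exact mem_polar_argmaxSet_of_weight_ne_zero (right_ne_zero_of_mul hb)
  · simp only [dowkerMap, Pi.smul_apply, smul_eq_mul, ← mul_sum, inv_mul_cancel₀ hsum.ne']

theorem dowkerMap_le_of_mem_polar (hσ : ∀ a, y a ≠ 0 → a ∈ σ) {b : B} (hb : b ∈ polar R σ)
    (b' : B) : dowkerMap R y b' ≤ dowkerMap R y b :=
  mul_le_mul_of_nonneg_left (weight_le_of_mem_polar hσ hb b')
    (inv_nonneg.2 (sum_nonneg fun b _ => weight_nonneg R y b))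

theorem mem_polar_polar_of_dowkerMap_dowkerMap_ne_zero (hσ : ∀ a, y a ≠ 0 → a ∈ σ) {a : A}
    (ha : dowkerMap (flip R) (dowkerMap R y) a ≠ 0) : a ∈ polar (flip R) (polar R σ) :=
  polar_anti (flip R) (fun _ hb => mem_filter.2 ⟨mem_univ _, dowkerMap_le_of_mem_polar hσ hb⟩)
    (mem_polar_argmaxSet_of_weight_ne_zero (right_ne_zero_of_mul ha))

variable (R)

def dowkerContinuousMap : C(geomReal (dowkerComplex R), geomReal (dowkerComplex (flip R))) where
  toFun y := ⟨dowkerMap R y, dowkerMap_mem_geomReal y.2⟩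
  continuous_toFun := by
    have hw : Continuous fun y : geomReal (dowkerComplex R) => weight R (y : A → ℝ) :=
      (continuous_weight R).comp continuous_subtype_val
    have hsum : Continuous fun y : geomReal (dowkerComplex R) => (∑ b, weight R y b)⁻¹ :=
      (continuous_finsetSum _ fun b _ => (continuous_apply b).comp hw).inv₀
        fun y => (sum_weight_pos y.2).ne'
    exact (hsum.smul hw).subtype_mk _

theorem dowkerContinuousMap_comp_homotopic_id :
    ((dowkerContinuousMap (flip R)).comp (dowkerContinuousMap R)).Homotopic
      (ContinuousMap.id _) := by
  refine homotopic_of_forall_exists_simplex fun y => ?_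
  obtain ⟨-, σ, hσK, hσ, -⟩ := y.2
  exact ⟨_, polar_mem_dowkerComplex (flip R) (polar_mem_dowkerComplex R hσK),
    fun a ha => mem_polar_polar_of_dowkerMap_dowkerMap_ne_zero hσ ha,
    fun a ha => subset_polar_polar R σ (hσ a ha)⟩

def homotopyEquiv :
    ContinuousMap.HomotopyEquiv (geomReal (dowkerComplex R)) (geomReal (dowkerComplex (flip R)))
    where
  toFun := dowkerContinuousMap R
  invFun := dowkerContinuousMap (flip R)
  left_inv := dowkerContinuousMap_comp_homotopic_id R
  right_inv := dowkerContinuousMap_comp_homotopic_id (flip R)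

end Map

theorem thetaComplex_eq_dowkerComplex {V : Type*} (H : Set (Set V)) :
    thetaComplex H = dowkerComplex fun (v : V) (h : H) => v ∉ (h : Set V) := by
  ext σ
  simp [thetaComplex, dowkerComplex]

theorem thetaComplex_dualEdges_eq_dowkerComplex {V : Type*} (H : Set (Set V)) :
    thetaComplex (dualEdges H) = dowkerComplex fun (h : H) (v : V) => v ∉ (h : Set V) := by
  ext T
  simp [thetaComplex, dowkerComplex, dualEdges]

end Dowker

end

theorem theta_dual_homotopyEquiv_general {V : Type*} [Finite V] (H : Set (Set V)) :
    Nonempty (ContinuousMap.HomotopyEquiv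
      (↥(geomReal (thetaComplex (dualEdges H))))
      (↥(geomReal (thetaComplex H)))) := by
  have := Fintype.ofFinite V
  have := Fintype.ofFinite H
  rw [Dowker.thetaComplex_dualEdges_eq_dowkerComplex, Dowker.thetaComplex_eq_dowkerComplex]
  exact ⟨Dowker.homotopyEquiv _⟩

/-- If `𝓗` is a finite hypergraph in which every vertex avoids
at least one hyperedge, then `Θ(𝓗*)` is homotopy equivalent to `Θ(𝓗)`. -/
theorem theta_dual_homotopyEquiv {V : Type*} [Finite V] [Nonempty V] (H : Set (Set V))
    (hcover : ∀ v : V, ∃ h ∈ H, v ∉ h) :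
    Nonempty (ContinuousMap.HomotopyEquiv
      (↥(geomReal (thetaComplex (dualEdges H))))
      (↥(geomReal (thetaComplex H)))) :=
  theta_dual_homotopyEquiv_general H
end

section
/- For any finite simplicial complex K and any sequence of distinct vertices v₁,…,v_n of K, the sequential vector field D_{v₁,…,v_n} is a gradient vector field, i.e. it has no closed gradient paths. -/
/-- `σ` appears in some vector of the discrete vector field `D`. -/
def InVector {V : Type*} (D : Set (Finset V × Finset V)) (σ : Finset V) : Prop :=
  (∃ τ, (σ, τ) ∈ D) ∨ (∃ τ, (τ, σ) ∈ D)

/-- The critical simplices of a vector field `D` on a complex `K`: the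
simplices of `K` appearing in no vector of `D`. -/
def critical {V : Type*} (K : Set (Finset V)) (D : Set (Finset V × Finset V)) :
    Set (Finset V) :=
  {σ | σ ∈ K ∧ ¬ InVector D σ}

/-- One step in the construction of the sequential vector field: add to `D` all
vectors `(σ, σ ∪ {v})` where both `σ` and `σ ∪ {v}` are critical for `D`. -/
def extendField {V : Type*} [DecidableEq V] (K : Set (Finset V))
    (D : Set (Finset V × Finset V)) (v : V) : Set (Finset V × Finset V) :=
  D ∪ {q | ∃ σ : Finset V, q = (σ, insert v σ) ∧ v ∉ σ ∧
    σ ∈ critical K D ∧ insert v σ ∈ critical K D}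

/-- The sequential vector field `D_{v₁,…,v_n}` determined by a list of
vertices, built by successively extending the empty vector field. -/
def seqField {V : Type*} [DecidableEq V] (K : Set (Finset V)) (l : List V) :
    Set (Finset V × Finset V) :=
  l.foldl (extendField K) ∅

/-- `step a b` holds when the gradient path can continue from the vector `a`
to the vector `b`: the tail `b.1` is a codimension-1 face of the head `a.2`
distinct from `a.1`. -/
def step {V : Type*} (a b : Finset V × Finset V) : Prop :=
  b.1 ⊆ a.2 ∧ a.2.card = b.1.card + 1 ∧ b.1 ≠ a.1

/-- A vector field is gradient if no gradient path is a loop: for every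
nonempty chain of vectors of `D` forming a gradient path, the path cannot
close up back to its starting simplex. -/
def IsGradient {V : Type*} (D : Set (Finset V × Finset V)) : Prop :=
  ∀ (p : List (Finset V × Finset V)) (hp : p ≠ []),
    (∀ x ∈ p, x ∈ D) → p.Chain' step → ¬ step (p.getLast hp) (p.head hp)

/-! A closed gradient path, unrolled into a periodic sequence of vectors, contains a vector
`(σ, σ ∪ {w})` added at the earliest stage among its vectors. The vertex `w` enters the path
there, and since the path closes up it must leave it again at some step from a head `τ` to a
tail `σ'`, so that `τ = σ' ∪ {w}`. At stage `w` both `σ'` and `τ` were still critical (every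
vector of the path is added no earlier), so `(σ', τ)` was added then; this makes `τ`
non-critical when the vector with head `τ` is added later, unless that vector is added at
stage `w` itself, which is impossible as its tail contains `w`. -/

theorem List.IsChain.exists_periodic {α : Type*} {R : α → α → Prop} {p : List α}
    (hp : p ≠ []) (hchain : p.IsChain R) (hclose : R (p.getLast hp) (p.head hp)) :
    ∃ a : ℕ → α, Function.Periodic a p.length ∧ (∀ k, a k ∈ p) ∧
      ∀ k, R (a k) (a (k + 1)) := by
  have hpos : 0 < p.length := List.length_pos_iff.mpr hp
  refine ⟨fun k => p[k % p.length]'(Nat.mod_lt _ hpos), fun k => by simp, fun k => by simp,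
    fun k => ?_⟩
  have hk : k % p.length < p.length := Nat.mod_lt _ hpos
  by_cases hlast : k % p.length + 1 < p.length
  · have hsucc : (k + 1) % p.length = k % p.length + 1 := by
      rw [Nat.add_mod, Nat.mod_eq_of_lt (a := 1) (by omega), Nat.mod_eq_of_lt hlast]
    simp only [hsucc]
    exact List.isChain_iff_getElem.mp hchain _ hlast
  · have hk' : k % p.length = p.length - 1 := by omega
    have hsucc : (k + 1) % p.length = 0 := by
      have hdiv := Nat.div_add_mod k p.length
      rw [show k + 1 = p.length * (k / p.length + 1) by rw [Nat.mul_add]; omega]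
      exact Nat.mul_mod_right _ _
    simp only [hsucc, hk']
    simpa [List.getLast_eq_getElem, List.head_eq_getElem] using hclose

theorem Nat.exists_and_not_succ {P : ℕ → Prop} {a b : ℕ} (hab : a ≤ b) (ha : P a)
    (hb : ¬ P b) : ∃ j, P j ∧ ¬ P (j + 1) := by
  by_contra! h
  exact hb (Nat.le_induction ha (fun j _ => h j) b hab)

section SequentialField

variable {V : Type*}

theorem InVector.mono {D D' : Set (Finset V × Finset V)} (h : D ⊆ D') {σ : Finset V}
    (hσ : InVector D σ) : InVector D' σ :=
  hσ.imp (fun ⟨τ, hτ⟩ => ⟨τ, h hτ⟩) (fun ⟨τ, hτ⟩ => ⟨τ, h hτ⟩)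

theorem critical_anti {K : Set (Finset V)} {D D' : Set (Finset V × Finset V)} (h : D ⊆ D') :
    critical K D' ⊆ critical K D :=
  fun _ hσ => ⟨hσ.1, fun hin => hσ.2 (hin.mono h)⟩

variable [DecidableEq V]

theorem seqField_append_singleton (K : Set (Finset V)) (l : List V) (v : V) :
    seqField K (l ++ [v]) = extendField K (seqField K l) v :=
  List.foldl_append ..

theorem seqField_mono (K : Set (Finset V)) {l₁ l₂ : List V} (h : l₁ <+: l₂) :
    seqField K l₁ ⊆ seqField K l₂ := by
  obtain ⟨t, rfl⟩ := h
  induction t using List.reverseRecOn with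
  | nil => simp
  | append_singleton t v ih =>
    rw [← List.append_assoc, seqField_append_singleton]
    exact ih.trans Set.subset_union_left

theorem critical_seqField_anti (K : Set (Finset V)) {l₁ l₂ : List V} (h : l₁ <+: l₂) :
    critical K (seqField K l₂) ⊆ critical K (seqField K l₁) :=
  critical_anti (seqField_mono K h)

theorem exists_stage_of_mem_seqField {K : Set (Finset V)} {l : List V}
    {a : Finset V × Finset V} (ha : a ∈ seqField K l) :
    ∃ c v, c ++ [v] <+: l ∧ a.2 = insert v a.1 ∧ v ∉ a.1 ∧
      a.1 ∈ critical K (seqField K c) ∧ a.2 ∈ critical K (seqField K c) := by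
  induction l using List.reverseRecOn with
  | nil => simp [seqField] at ha
  | append_singleton l u ih =>
    rw [seqField_append_singleton] at ha
    rcases ha with hold | ⟨σ, rfl, hu, hσ, hτ⟩
    · obtain ⟨c, v, hc, hrest⟩ := ih hold
      exact ⟨c, v, hc.trans (List.prefix_append _ _), hrest⟩
    · exact ⟨l, u, List.prefix_rfl, rfl, hu, hσ, hτ⟩

theorem insert_notMem_critical_seqField {K : Set (Finset V)} {c c' : List V} {w : V}
    {σ : Finset V} (hc : c ++ [w] <+: c') (hw : w ∉ σ)
    (hσ : σ ∈ critical K (seqField K c)) :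
    insert w σ ∉ critical K (seqField K c') := by
  intro hτ
  have hτc : insert w σ ∈ critical K (seqField K c) :=
    critical_seqField_anti K ((List.prefix_append _ _).trans hc) hτ
  have hpair : (σ, insert w σ) ∈ seqField K (c ++ [w]) := by
    rw [seqField_append_singleton]
    exact Or.inr ⟨σ, rfl, hw, hσ, hτc⟩
  exact hτ.2 (Or.inr ⟨σ, seqField_mono K hc hpair⟩)

theorem mem_of_step {a b : Finset V × Finset V} {v : V} (ha : a.2 = insert v a.1) (hv : v ∉ a.1)
    (h : step a b) : v ∈ b.1 := by
  obtain ⟨hsub, hcard, hne⟩ := h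
  by_contra hvb
  rw [ha, Finset.subset_insert_iff_of_notMem hvb] at hsub
  rw [ha, Finset.card_insert_of_notMem hv] at hcard
  exact hne (Finset.eq_of_subset_of_card_le hsub (by omega))

theorem insert_eq_of_step {a b : Finset V × Finset V} {w : V} (h : step a b) (hwa : w ∈ a.2)
    (hwb : w ∉ b.1) : insert w b.1 = a.2 := by
  obtain ⟨hsub, hcard, -⟩ := h
  refine Finset.eq_of_subset_of_card_le (Finset.insert_subset hwa hsub) ?_
  rw [Finset.card_insert_of_notMem hwb, hcard]

theorem seqField_not_periodic_path (K : Set (Finset V)) (l : List V)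
    {a : ℕ → Finset V × Finset V} {n : ℕ} (hn : 0 < n) (hper : Function.Periodic a n)
    (hmem : ∀ k, a k ∈ seqField K l) (hstep : ∀ k, step (a k) (a (k + 1))) : False := by
  choose c v hpre ha hv hcrit₁ hcrit₂ using fun k => exists_stage_of_mem_seqField (hmem k)
  obtain ⟨i, hi⟩ : ∃ i, ∀ k, (c i).length ≤ (c k).length :=
    ⟨_, fun k => Function.argmin_le (fun k => (c k).length) k⟩
  have hprefix k : c i <+: c k :=
    List.prefix_of_prefix_length_le ((List.prefix_append _ _).trans (hpre i))
      ((List.prefix_append _ _).trans (hpre k)) (hi k)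
  have henter : v i ∈ (a (i + 1)).1 := mem_of_step (ha i) (hv i) (hstep i)
  have hleave : v i ∉ (a (i + 1 + (n - 1))).1 := by
    rw [show i + 1 + (n - 1) = i + n by omega, hper]
    exact hv i
  obtain ⟨j, hin, hout⟩ := Nat.exists_and_not_succ (P := fun k => v i ∈ (a k).1)
    (Nat.le_add_right _ _) henter hleave
  have hhead : insert (v i) (a (j + 1)).1 = (a j).2 :=
    insert_eq_of_step (hstep j) (ha j ▸ Finset.mem_insert_of_mem hin) hout
  by_cases hlen : (c j).length = (c i).length
  · have hsame : c i ++ [v i] = c j ++ [v j] :=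
      (List.prefix_of_prefix_length_le (hpre i) (hpre j) (by simp [hlen])).eq_of_length
        (by simp [hlen])
    obtain ⟨-, hvij⟩ := List.append_inj' hsame rfl
    rw [List.singleton_inj] at hvij
    exact hv j (hvij ▸ hin)
  · have hlater : c i ++ [v i] <+: c j :=
      List.prefix_of_prefix_length_le (hpre i) ((List.prefix_append _ _).trans (hpre j))
        (by simp only [List.length_append, List.length_singleton]; have := hi j; omega)
    exact insert_notMem_critical_seqField hlater hout
      (critical_seqField_anti K (hprefix (j + 1)) (hcrit₁ (j + 1))) (hhead ▸ hcrit₂ j)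

end SequentialField

theorem seqField_isGradient_general {V : Type*} [DecidableEq V]
    (K : Set (Finset V))
    (l : List V) :
    IsGradient (seqField K l) := by
  intro p hp hmem hchain hclose
  obtain ⟨a, hper, hap, hstep⟩ := hchain.exists_periodic hp hclose
  exact seqField_not_periodic_path K l (List.length_pos_iff.mpr hp) hper
    (fun k => hmem _ (hap k)) hstep

/-- For a finite simplicial complex `K` and distinct vertices
`v₁, …, v_n` of `K`, the sequential vector field `D_{v₁,…,v_n}` is a gradient
vector field: it has no closed gradient paths. -/
theorem seqField_isGradient {V : Type*} [DecidableEq V] [Finite V]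
    (K : Set (Finset V))
    (hne : ∀ σ ∈ K, σ.Nonempty)
    (hdown : ∀ σ ∈ K, ∀ τ : Finset V, τ ⊆ σ → τ.Nonempty → τ ∈ K)
    (l : List V) (hl : l.Nodup) (hvert : ∀ v ∈ l, ({v} : Finset V) ∈ K) :
    IsGradient (seqField K l) :=
  seqField_isGradient_general K l
end

section
/- Let I_n denote the path graph with n edges. Then Θ(I_n) is contractible if n = 3k, is homotopy equivalent to the sphere S^{2k−1} if n = 3k+1, and is homotopy equivalent to the sphere S^{2k} if n = 3k+2. -/
/-- The unit sphere in `ℝ^d`, i.e. the sphere `S^{d-1}` (empty when `d = 0`). -/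
def sphereSpace (d : ℕ) : Set (EuclideanSpace ℝ (Fin d)) := Metric.sphere 0 1

/-- A base point on the unit sphere in `ℝ^d`, `d > 0`. -/
noncomputable def spherePt (d : ℕ) (hd : 0 < d) : ↥(sphereSpace d) :=
  ⟨EuclideanSpace.single (⟨0, hd⟩ : Fin d) 1, by
    simp [sphereSpace, EuclideanSpace.norm_single]⟩

/-- The path graph `I_n` with `n` edges: vertices `{1, …, n+1}` (modeled by
`Fin (n+1)`) and edges `{i, i+1}`. -/
def pathEdges (n : ℕ) : Set (Set (Fin (n + 1))) :=
  {e | ∃ i : Fin n, e = ({i.castSucc, i.succ} : Set (Fin (n + 1)))}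


set_option linter.unusedSectionVars false

namespace ThetaPf

open ContinuousMap

variable {V : Type*} [DecidableEq V]

/-- mass-transfer map pushing coordinate `v` onto coordinate `a`. -/
def rmap (v a : V) (f : V → ℝ) : V → ℝ :=
  fun u => if u = v then 0 else if u = a then f a + f v else f u

lemma rmap_eq (v a : V) (hav : a ≠ v) (f : V → ℝ) (u : V) :
    rmap v a f u = f u + ((if u = a then f v else 0) - (if u = v then f v else 0)) := by
  unfold rmap
  by_cases h1 : u = v
  · subst h1
    rw [if_pos rfl, if_pos rfl, if_neg (fun h => hav (h.symm))]
    ring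
  · rw [if_neg h1, if_neg h1]
    by_cases h2 : u = a
    · rw [if_pos h2, if_pos h2]; subst h2; ring
    · rw [if_neg h2, if_neg h2]; ring

lemma rmap_sum (v a : V) (hav : a ≠ v) (f : V → ℝ) {s : Finset V}
    (hv : v ∈ s) (ha : a ∈ s) :
    ∑ u ∈ s, rmap v a f u = ∑ u ∈ s, f u := by
  have : ∑ u ∈ s, rmap v a f u
      = ∑ u ∈ s, (f u + ((if u = a then f v else 0) - (if u = v then f v else 0))) :=
    Finset.sum_congr rfl (fun u _ => rmap_eq v a hav f u)
  rw [this, Finset.sum_add_distrib, Finset.sum_sub_distrib]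
  rw [Finset.sum_ite_eq' s a (fun _ => f v), Finset.sum_ite_eq' s v (fun _ => f v)]
  rw [if_pos ha, if_pos hv]
  ring

lemma rmap_of_zero (v a : V) (f : V → ℝ) (hfv : f v = 0) : rmap v a f = f := by
  funext u
  unfold rmap
  by_cases h1 : u = v
  · subst h1; simp [hfv]
  · rw [if_neg h1]
    by_cases h2 : u = a
    · subst h2; simp [hfv]
    · rw [if_neg h2]

lemma geomReal_zero_of_fv {K : Set (Finset V)} {v : V} {f : V → ℝ}
    (hf : f ∈ geomReal {σ | σ ∈ K ∧ v ∉ σ}) : f v = 0 := by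
  obtain ⟨_, σ, ⟨_, hvσ⟩, hsupp, _⟩ := hf
  by_contra h
  exact hvσ (hsupp v h)

lemma fold_line_mem {K : Set (Finset V)} {v a : V} (hav : a ≠ v)
    (hins : ∀ σ ∈ K, v ∈ σ → insert a σ ∈ K)
    {f : V → ℝ} (hf : f ∈ geomReal K) {t : ℝ} (ht0 : 0 ≤ t) (ht1 : t ≤ 1) :
    (fun u => (1 - t) * f u + t * rmap v a f u) ∈ geomReal K := by
  obtain ⟨hpos, σ, hσ, hsupp, hsum⟩ := hf
  by_cases hv : v ∈ σ
  · refine ⟨?_, insert a σ, hins σ hσ hv, ?_, ?_⟩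
    · intro u
      have h1 : 0 ≤ 1 - t := by linarith
      have : 0 ≤ rmap v a f u := by
        unfold rmap
        split_ifs
        · exact le_refl 0
        · exact add_nonneg (hpos a) (hpos v)
        · exact hpos u
      exact add_nonneg (mul_nonneg h1 (hpos u)) (mul_nonneg ht0 this)
    · intro u hu
      have hu' : (1 - t) * f u + t * rmap v a f u ≠ 0 := hu
      by_contra hmem
      have hua : u ≠ a := fun h => hmem (h ▸ Finset.mem_insert_self a σ)
      have huσ : u ∉ σ := fun h => hmem (Finset.mem_insert_of_mem h)
      have huv : u ≠ v := fun h => huσ (h ▸ hv)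
      have hfu : f u = 0 := by
        by_contra h; exact huσ (hsupp u h)
      have : rmap v a f u = f u := by unfold rmap; rw [if_neg huv, if_neg hua]
      rw [this, hfu] at hu'
      simp at hu'
    · have hsub : σ ⊆ insert a σ := Finset.subset_insert a σ
      have hf1 : ∑ u ∈ insert a σ, f u = 1 := by
        rw [← Finset.sum_subset hsub (fun x _ hx => ?_)]
        · exact hsum
        · by_contra h
          exact (hx) (hsupp x h)
      have hr1 : ∑ u ∈ insert a σ, rmap v a f u = 1 := by
        rw [rmap_sum v a hav f (Finset.mem_insert_of_mem hv) (Finset.mem_insert_self a σ)]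
        exact hf1
      rw [Finset.sum_add_distrib, ← Finset.mul_sum, ← Finset.mul_sum, hf1, hr1]
      ring
  · have hfv : f v = 0 := by
      by_contra h; exact hv (hsupp v h)
    have : (fun u => (1 - t) * f u + t * rmap v a f u) = f := by
      rw [rmap_of_zero v a f hfv]; funext u; ring
    rw [this]
    exact ⟨hpos, σ, hσ, hsupp, hsum⟩

lemma fold_r_mem {K : Set (Finset V)} {v a : V} (hav : a ≠ v)
    (hers : ∀ σ ∈ K, v ∈ σ → (insert a σ).erase v ∈ K)
    {f : V → ℝ} (hf : f ∈ geomReal K) :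
    rmap v a f ∈ geomReal {σ | σ ∈ K ∧ v ∉ σ} := by
  obtain ⟨hpos, σ, hσ, hsupp, hsum⟩ := hf
  have hrpos : ∀ u, 0 ≤ rmap v a f u := by
    intro u
    unfold rmap
    split_ifs
    · exact le_refl 0
    · exact add_nonneg (hpos a) (hpos v)
    · exact hpos u
  by_cases hv : v ∈ σ
  · refine ⟨hrpos, (insert a σ).erase v, ⟨hers σ hσ hv, Finset.notMem_erase v _⟩, ?_, ?_⟩
    · intro u hu
      have huv : u ≠ v := by
        intro h; subst h
        have : rmap u a f u = 0 := by unfold rmap; rw [if_pos rfl]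
        exact hu this
      rw [Finset.mem_erase]
      refine ⟨huv, ?_⟩
      by_cases hua : u = a
      · exact hua ▸ Finset.mem_insert_self a σ
      · have : rmap v a f u = f u := by unfold rmap; rw [if_neg huv, if_neg hua]
        rw [this] at hu
        exact Finset.mem_insert_of_mem (hsupp u hu)
    · have hz : rmap v a f v = 0 := by unfold rmap; rw [if_pos rfl]
      rw [Finset.sum_erase _ hz]
      rw [rmap_sum v a hav f (Finset.mem_insert_of_mem hv) (Finset.mem_insert_self a σ)]
      rw [← Finset.sum_subset (Finset.subset_insert a σ) (fun x _ hx => ?_)]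
      · exact hsum
      · by_contra h
        exact hx (hsupp x h)
  · rw [rmap_of_zero v a f (by by_contra h; exact hv (hsupp v h))]
    exact ⟨hpos, σ, ⟨hσ, hv⟩, hsupp, hsum⟩

lemma rmap_continuous (v a : V) : Continuous (fun f : V → ℝ => rmap v a f) := by
  apply continuous_pi
  intro u
  unfold rmap
  by_cases h1 : u = v
  · simp only [if_pos h1]; exact continuous_const
  · simp only [if_neg h1]
    by_cases h2 : u = a
    · simp only [if_pos h2]
      exact (continuous_apply a).add (continuous_apply v)
    · simp only [if_neg h2]
      exact continuous_apply u

/-- the fold homotopy equivalence -/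
noncomputable def foldEquiv (K K' : Set (Finset V)) (v a : V) (hav : a ≠ v)
    (hK' : K' = {σ | σ ∈ K ∧ v ∉ σ})
    (hins : ∀ σ ∈ K, v ∈ σ → insert a σ ∈ K)
    (hers : ∀ σ ∈ K, v ∈ σ → (insert a σ).erase v ∈ K) :
    HomotopyEquiv ↥(geomReal K') ↥(geomReal K) := by
  subst hK'
  have hsub : geomReal {σ | σ ∈ K ∧ v ∉ σ} ⊆ geomReal K := by
    rintro f ⟨hpos, σ, ⟨hσ, _⟩, hsupp, hsum⟩
    exact ⟨hpos, σ, hσ, hsupp, hsum⟩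
  let toC : C(↥(geomReal {σ | σ ∈ K ∧ v ∉ σ}), ↥(geomReal K)) :=
    ⟨fun f => ⟨f.1, hsub f.2⟩, Continuous.subtype_mk continuous_subtype_val _⟩
  let invC : C(↥(geomReal K), ↥(geomReal {σ | σ ∈ K ∧ v ∉ σ})) :=
    ⟨fun f => ⟨rmap v a f.1, fold_r_mem hav hers f.2⟩,
      Continuous.subtype_mk ((rmap_continuous v a).comp continuous_subtype_val) _⟩
  have hleft : invC.comp toC = ContinuousMap.id _ := by
    ext f
    show rmap v a (f.1 : V → ℝ) _ = _
    rw [rmap_of_zero v a f.1 (geomReal_zero_of_fv f.2)]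
    rfl
  have H : ContinuousMap.Homotopy (ContinuousMap.id ↥(geomReal K)) (toC.comp invC) := by
    refine
      { toFun := fun p => ⟨fun u => (1 - (p.1 : ℝ)) * p.2.1 u + (p.1 : ℝ) * rmap v a p.2.1 u,
          fold_line_mem hav hins p.2.2 p.1.2.1 p.1.2.2⟩
        continuous_toFun := ?_
        map_zero_left := ?_
        map_one_left := ?_ }
    · apply Continuous.subtype_mk
      apply continuous_pi
      intro u
      have hval : Continuous fun p : unitInterval × ↥(geomReal K) => (p.2 : V → ℝ) :=
        continuous_subtype_val.comp continuous_snd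
      have ht : Continuous fun p : unitInterval × ↥(geomReal K) => (p.1 : ℝ) :=
        continuous_subtype_val.comp continuous_fst
      have h1 : Continuous fun p : unitInterval × ↥(geomReal K) => (p.2 : V → ℝ) u :=
        (continuous_apply u).comp hval
      have h2 : Continuous fun p : unitInterval × ↥(geomReal K) => rmap v a (p.2 : V → ℝ) u :=
        ((continuous_apply u).comp (rmap_continuous v a)).comp hval
      exact ((continuous_const.sub ht).mul h1).add (ht.mul h2)
    · intro f
      apply Subtype.ext
      funext u
      show (1 - ((0 : unitInterval) : ℝ)) * f.1 u + ((0 : unitInterval) : ℝ) * rmap v a f.1 u = f.1 u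
      norm_num
    · intro f
      apply Subtype.ext
      funext u
      show (1 - ((1 : unitInterval) : ℝ)) * f.1 u + ((1 : unitInterval) : ℝ) * rmap v a f.1 u
          = rmap v a f.1 u
      norm_num
  exact ⟨toC, invC, by rw [hleft], ⟨H.symm⟩⟩


/-- the `i`-th edge of the path, as a set of vertices -/
def edg (n i : ℕ) (h : i < n) : Set (Fin (n+1)) :=
  {(⟨i, by omega⟩ : Fin (n+1)), (⟨i+1, by omega⟩ : Fin (n+1))}

lemma edg_mem {n i : ℕ} (h : i < n) : edg n i h ∈ pathEdges n := by
  refine ⟨⟨i, h⟩, ?_⟩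
  unfold edg
  congr 1 <;> apply Fin.ext <;> simp

lemma mem_edg {n i : ℕ} (h : i < n) (x : Fin (n+1)) :
    x ∈ edg n i h ↔ (x : ℕ) = i ∨ (x : ℕ) = i + 1 := by
  unfold edg
  constructor
  · rintro (h1 | h1) <;> [left; right] <;> rw [h1]
  · rintro (h1 | h1)
    · left; apply Fin.ext; exact h1
    · right; apply Fin.ext; exact h1

lemma pathEdges_eq {n : ℕ} {e : Set (Fin (n+1))} (he : e ∈ pathEdges n) :
    ∃ (i : ℕ) (h : i < n), e = edg n i h := by
  obtain ⟨i, rfl⟩ := he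
  refine ⟨(i : ℕ), i.isLt, ?_⟩
  unfold edg
  congr 1 <;> apply Fin.ext <;> simp

/-- the theta complex of the path restricted to a vertex set `U` -/
def thetaU (n : ℕ) (U : Set (Fin (n+1))) : Set (Finset (Fin (n+1))) :=
  {σ | σ ∈ thetaComplex (pathEdges n) ∧ (↑σ : Set (Fin (n+1))) ⊆ U}

lemma thetaU_diff (n : ℕ) (U : Set (Fin (n+1))) (v : Fin (n+1)) :
    thetaU n (U \ {v}) = {σ | σ ∈ thetaU n U ∧ v ∉ σ} := by
  ext σ
  constructor
  · rintro ⟨hθ, hsub⟩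
    refine ⟨⟨hθ, fun x hx => (hsub hx).1⟩, fun hv => (hsub (by exact_mod_cast hv)).2 rfl⟩
  · rintro ⟨⟨hθ, hsub⟩, hv⟩
    refine ⟨hθ, fun x hx => ⟨hsub hx, fun hxv => ?_⟩⟩
    rw [Set.mem_singleton_iff] at hxv
    subst hxv
    exact hv (by exact_mod_cast hx)

/-- master validity lemma for folding `v` onto `a` in `thetaU n U`. -/
lemma theta_fold (n : ℕ) (U : Set (Fin (n+1))) (v a : Fin (n+1)) (hav : a ≠ v) (haU : a ∈ U)
    (hedge : ∀ e ∈ pathEdges n, a ∈ e → v ∉ e →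
      ∃ e' ∈ pathEdges n, a ∉ e' ∧ ∀ u ∈ e', u ∈ U → u ∈ e) :
    (∀ σ ∈ thetaU n U, v ∈ σ → insert a σ ∈ thetaU n U) ∧
    (∀ σ ∈ thetaU n U, v ∈ σ → (insert a σ).erase v ∈ thetaU n U) := by
  have key : ∀ σ ∈ thetaU n U, v ∈ σ → ∃ e ∈ pathEdges n,
      a ∉ e ∧ ∀ u ∈ σ, u ∉ e := by
    rintro σ ⟨⟨hne, e, heP, havoid⟩, hsub⟩ hv
    by_cases ha : a ∈ e
    · have hve : v ∉ e := havoid v hv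
      obtain ⟨e', he'P, hae', hcond⟩ := hedge e heP ha hve
      refine ⟨e', he'P, hae', fun u hu hue' => ?_⟩
      exact havoid u hu (hcond u hue' (hsub (by exact_mod_cast hu)))
    · exact ⟨e, heP, ha, havoid⟩
  constructor
  · rintro σ hσ hv
    obtain ⟨e, heP, hae, havoid⟩ := key σ hσ hv
    refine ⟨⟨⟨a, Finset.mem_insert_self a σ⟩, e, heP, ?_⟩, ?_⟩
    · intro u hu
      rcases Finset.mem_insert.mp hu with h | h
      · subst h; exact hae
      · exact havoid u h
    · intro x hx
      rcases Finset.mem_insert.mp (by exact_mod_cast hx) with h | h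
      · subst h; exact haU
      · exact hσ.2 (by exact_mod_cast h)
  · rintro σ hσ hv
    obtain ⟨e, heP, hae, havoid⟩ := key σ hσ hv
    have hamem : a ∈ (insert a σ).erase v :=
      Finset.mem_erase.mpr ⟨hav, Finset.mem_insert_self a σ⟩
    refine ⟨⟨⟨a, hamem⟩, e, heP, ?_⟩, ?_⟩
    · intro u hu
      have hu' := Finset.mem_of_mem_erase hu
      rcases Finset.mem_insert.mp hu' with h | h
      · subst h; exact hae
      · exact havoid u h
    · intro x hx
      have hx' := Finset.mem_of_mem_erase (by exact_mod_cast hx : x ∈ (insert a σ).erase v)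
      rcases Finset.mem_insert.mp hx' with h | h
      · subst h; exact haU
      · exact hσ.2 (by exact_mod_cast h)

noncomputable def setEquiv {V : Type*} (K K' : Set (Finset V)) (h : K = K') :
    HomotopyEquiv ↥(geomReal K) ↥(geomReal K') :=
  (Homeomorph.setCongr (by rw [h])).toHomotopyEquiv

/-- vertex sets for phase 1 : vertices `≡ 1 mod 3` below the threshold `t` are deleted -/
def U1 (n t : ℕ) : Set (Fin (n+1)) := {w | (w : ℕ) % 3 ≠ 1 ∨ t ≤ (w : ℕ)}

/-- vertex sets for phase 2 (`n ≡ 0 mod 3`): remaining vertices below `t` are deleted,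
the vertex `n` is kept -/
def U2 (n t : ℕ) : Set (Fin (n+1)) := {w | ((w : ℕ) % 3 ≠ 1 ∧ t ≤ (w : ℕ)) ∨ (w : ℕ) = n}

noncomputable def phase1Step (n t : ℕ) :
    HomotopyEquiv ↥(geomReal (thetaU n (U1 n (t+1)))) ↥(geomReal (thetaU n (U1 n t))) := by
  by_cases hc : t % 3 = 1 ∧ t ≤ n
  · obtain ⟨ht3, htn⟩ := hc
    have ht1 : 1 ≤ t := by omega
    set v : Fin (n+1) := ⟨t, by omega⟩ with hvdef
    set a : Fin (n+1) := ⟨t-1, by omega⟩ with hadef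
    have hvv : (v : ℕ) = t := rfl
    have haa : (a : ℕ) = t - 1 := rfl
    have hav : a ≠ v := by
      intro h
      have := congrArg Fin.val h
      rw [hvv, haa] at this
      omega
    have hU : U1 n (t+1) = U1 n t \ {v} := by
      ext w
      have hw := w.isLt
      simp only [U1, Set.mem_setOf_eq, Set.mem_diff, Set.mem_singleton_iff, Fin.ext_iff, hvv]
      omega
    have hK : thetaU n (U1 n (t+1)) = {σ | σ ∈ thetaU n (U1 n t) ∧ v ∉ σ} := by
      rw [hU, thetaU_diff]
    have haU : a ∈ U1 n t := by
      simp only [U1, Set.mem_setOf_eq, haa]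
      omega
    have hedge : ∀ e ∈ pathEdges n, a ∈ e → v ∉ e →
        ∃ e' ∈ pathEdges n, a ∉ e' ∧ ∀ u ∈ e', u ∈ U1 n t → u ∈ e := by
      intro e heP hae hve
      obtain ⟨i, hi, rfl⟩ := pathEdges_eq heP
      rw [mem_edg] at hae
      rw [mem_edg] at hve
      rw [haa] at hae
      rw [hvv] at hve
      rcases hae with h | h
      · exfalso
        apply hve
        omega
      · have h4 : 4 ≤ t := by omega
        refine ⟨edg n (t-3) (by omega), edg_mem _, ?_, ?_⟩
        · rw [mem_edg, haa]
          omega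
        · intro u hu huU
          rw [mem_edg] at hu
          rw [mem_edg]
          have huU' : (u : ℕ) % 3 ≠ 1 ∨ t ≤ (u : ℕ) := huU
          omega
    obtain ⟨hins, hers⟩ := theta_fold n (U1 n t) v a hav haU hedge
    exact foldEquiv _ _ v a hav hK hins hers
  · refine setEquiv _ _ ?_
    have hU : U1 n (t+1) = U1 n t := by
      ext w
      have hw := w.isLt
      simp only [U1, Set.mem_setOf_eq]
      omega
    rw [hU]

noncomputable def phase1 (n : ℕ) :
    ∀ t, HomotopyEquiv ↥(geomReal (thetaU n (U1 n t))) ↥(geomReal (thetaComplex (pathEdges n)))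
  | 0 => setEquiv _ _ (by
      have : U1 n 0 = Set.univ := by
        ext w; simp [U1]
      rw [this]
      ext σ
      exact ⟨fun h => h.1, fun h => ⟨h, fun x _ => trivial⟩⟩)
  | (t+1) => (phase1Step n t).trans (phase1 n t)

noncomputable def phase2Step (n t : ℕ) (h3 : n % 3 = 0) (hn : 3 ≤ n) :
    HomotopyEquiv ↥(geomReal (thetaU n (U2 n (t+1)))) ↥(geomReal (thetaU n (U2 n t))) := by
  by_cases hc : t % 3 ≠ 1 ∧ t < n
  · obtain ⟨ht3, htn⟩ := hc
    set v : Fin (n+1) := ⟨t, by omega⟩ with hvdef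
    set a : Fin (n+1) := ⟨n, by omega⟩ with hadef
    have hvv : (v : ℕ) = t := rfl
    have haa : (a : ℕ) = n := rfl
    have hav : a ≠ v := by
      intro h
      have := congrArg Fin.val h
      rw [hvv, haa] at this
      omega
    have hU : U2 n (t+1) = U2 n t \ {v} := by
      ext w
      have hw := w.isLt
      simp only [U2, Set.mem_setOf_eq, Set.mem_diff, Set.mem_singleton_iff, Fin.ext_iff, hvv]
      omega
    have hK : thetaU n (U2 n (t+1)) = {σ | σ ∈ thetaU n (U2 n t) ∧ v ∉ σ} := by
      rw [hU, thetaU_diff]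
    have haU : a ∈ U2 n t := by
      simp only [U2, Set.mem_setOf_eq, haa]
      omega
    have hedge : ∀ e ∈ pathEdges n, a ∈ e → v ∉ e →
        ∃ e' ∈ pathEdges n, a ∉ e' ∧ ∀ u ∈ e', u ∈ U2 n t → u ∈ e := by
      intro e heP hae hve
      obtain ⟨i, hi, rfl⟩ := pathEdges_eq heP
      rw [mem_edg] at hae
      rw [mem_edg] at hve
      rw [haa] at hae
      rw [hvv] at hve
      have hi' : i = n - 1 := by omega
      refine ⟨edg n (n-2) (by omega), edg_mem _, ?_, ?_⟩
      · rw [mem_edg, haa]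
        omega
      · intro u hu huU
        rw [mem_edg] at hu
        rw [mem_edg]
        have huU' : ((u : ℕ) % 3 ≠ 1 ∧ t ≤ (u : ℕ)) ∨ (u : ℕ) = n := huU
        omega
    obtain ⟨hins, hers⟩ := theta_fold n (U2 n t) v a hav haU hedge
    exact foldEquiv _ _ v a hav hK hins hers
  · refine setEquiv _ _ ?_
    have hU : U2 n (t+1) = U2 n t := by
      ext w
      have hw := w.isLt
      simp only [U2, Set.mem_setOf_eq]
      omega
    rw [hU]

noncomputable def phase2 (n : ℕ) (h3 : n % 3 = 0) (hn : 3 ≤ n) :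
    ∀ t, HomotopyEquiv ↥(geomReal (thetaU n (U2 n t))) ↥(geomReal (thetaU n (U2 n 0)))
  | 0 => ContinuousMap.HomotopyEquiv.refl _
  | (t+1) => (phase2Step n t h3 hn).trans (phase2 n h3 hn t)

theorem contrOfSubsingleton (X : Type*) [TopologicalSpace X] [Subsingleton X] [Nonempty X] :
    ContractibleSpace X := by
  have x := Classical.arbitrary X
  constructor
  refine ⟨⟨ContinuousMap.const X (), ContinuousMap.const Unit x, ?_, ?_⟩⟩
  · have : (ContinuousMap.const Unit x).comp (ContinuousMap.const X ()) = ContinuousMap.id X := by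
      ext y; exact Subsingleton.elim _ _
    rw [this]
  · have : (ContinuousMap.const X ()).comp (ContinuousMap.const Unit x) = ContinuousMap.id Unit := by
      ext y
    rw [this]

section Contr

lemma theta_top_mem (n : ℕ) (hn3 : 3 ≤ n) : ({(⟨n, by omega⟩ : Fin (n+1))} : Finset (Fin (n+1))) ∈
    thetaU n {w : Fin (n+1) | (w : ℕ) = n} := by
  refine ⟨⟨⟨_, Finset.mem_singleton_self _⟩, edg n 0 (by omega), edg_mem _, ?_⟩, ?_⟩
  · intro u hu
    rw [Finset.mem_singleton] at hu
    subst hu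
    rw [mem_edg]
    show ¬(n = 0 ∨ n = 0 + 1)
    omega
  · intro x hx
    rw [Finset.mem_coe, Finset.mem_singleton] at hx
    subst hx
    show n = n
    rfl

lemma theta_top_eq (n : ℕ) :
    ∀ σ ∈ thetaU n {w : Fin (n+1) | (w : ℕ) = n},
      σ = ({(⟨n, by omega⟩ : Fin (n+1))} : Finset (Fin (n+1))) := by
  rintro σ ⟨⟨hne, _⟩, hsub⟩
  apply Finset.eq_singleton_iff_unique_mem.mpr
  obtain ⟨x, hx⟩ := hne
  have hval : ∀ u ∈ σ, u = (⟨n, by omega⟩ : Fin (n+1)) := by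
    intro u hu
    have : (u : ℕ) = n := hsub (Finset.mem_coe.mpr hu)
    exact Fin.ext this
  exact ⟨(hval x hx) ▸ hx, hval⟩

lemma pt_subsingleton (n : ℕ) : Subsingleton ↥(geomReal (thetaU n {w : Fin (n+1) | (w : ℕ) = n})) := by
  set x0 : Fin (n+1) := ⟨n, by omega⟩
  have key : ∀ f ∈ geomReal (thetaU n {w : Fin (n+1) | (w : ℕ) = n}),
      f = fun u => if u = x0 then (1:ℝ) else 0 := by
    rintro f ⟨hpos, σ, hσ, hsupp, hsum⟩
    have hσ1 := theta_top_eq n σ hσ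
    funext u
    by_cases h : u = x0
    · subst h
      rw [if_pos rfl]
      rw [hσ1, Finset.sum_singleton] at hsum
      exact hsum
    · rw [if_neg h]
      by_contra hne
      have := hsupp u hne
      rw [hσ1, Finset.mem_singleton] at this
      exact h this
  constructor
  rintro ⟨f, hf⟩ ⟨g, hg⟩
  apply Subtype.ext
  show f = g
  rw [key f hf, key g hg]

lemma pt_nonempty (n : ℕ) (hn3 : 3 ≤ n) :
    Nonempty ↥(geomReal (thetaU n {w : Fin (n+1) | (w : ℕ) = n})) := by
  set x0 : Fin (n+1) := ⟨n, by omega⟩ with hx0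
  refine ⟨⟨fun u => if u = x0 then (1:ℝ) else 0, ?_, {x0}, theta_top_mem n hn3, ?_, ?_⟩⟩
  · intro u
    show (0:ℝ) ≤ if u = x0 then (1:ℝ) else 0
    split_ifs <;> norm_num
  · intro u hu
    have hu' : (if u = x0 then (1:ℝ) else 0) ≠ 0 := hu
    rw [Finset.mem_singleton]
    by_contra h
    rw [if_neg h] at hu'
    exact hu' rfl
  · show (∑ u ∈ ({x0} : Finset (Fin (n+1))), if u = x0 then (1:ℝ) else 0) = 1
    rw [Finset.sum_singleton, if_pos rfl]

end Contr

theorem contractible_case (n : ℕ) (h3 : n % 3 = 0) (hn : 1 ≤ n) :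
    ContractibleSpace ↥(geomReal (thetaComplex (pathEdges n))) := by
  have hn3 : 3 ≤ n := by omega
  -- U1 n (n+1) = U2 n 0
  have hW : U1 n (n+1) = U2 n 0 := by
    ext w
    have hw := w.isLt
    simp only [U1, U2, Set.mem_setOf_eq]
    omega
  have hTop : U2 n n = {w : Fin (n+1) | (w : ℕ) = n} := by
    ext w
    have hw := w.isLt
    simp only [U2, Set.mem_setOf_eq]
    omega
  have e1 : ContinuousMap.HomotopyEquiv
      ↥(geomReal (thetaU n {w : Fin (n+1) | (w : ℕ) = n}))
      ↥(geomReal (thetaComplex (pathEdges n))) := by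
    refine ContinuousMap.HomotopyEquiv.trans ?_
      (ContinuousMap.HomotopyEquiv.trans (phase2 n h3 hn3 n) ?_)
    · exact setEquiv _ _ (by rw [hTop])
    · exact ContinuousMap.HomotopyEquiv.trans (setEquiv _ _ (by rw [← hW])) (phase1 n (n+1))
  have : Subsingleton ↥(geomReal (thetaU n {w : Fin (n+1) | (w : ℕ) = n})) :=
    pt_subsingleton n
  have : Nonempty ↥(geomReal (thetaU n {w : Fin (n+1) | (w : ℕ) = n})) :=
    pt_nonempty n hn3
  have : ContractibleSpace ↥(geomReal (thetaU n {w : Fin (n+1) | (w : ℕ) = n})) :=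
    contrOfSubsingleton _
  exact e1.symm.contractibleSpace

lemma isCompact_geomReal {V : Type*} [Fintype V] (K : Set (Finset V)) :
    IsCompact (geomReal K) := by
  classical
  have hrw : geomReal K = ⋃ σ ∈ K,
      {f : V → ℝ | (∀ v, 0 ≤ f v) ∧ (∀ v, f v ≠ 0 → v ∈ σ) ∧ ∑ v ∈ σ, f v = 1} := by
    ext f
    simp only [geomReal, Set.mem_setOf_eq, Set.mem_iUnion]
    constructor
    · rintro ⟨hpos, σ, hσ, h1, h2⟩
      exact ⟨σ, hσ, hpos, h1, h2⟩
    · rintro ⟨σ, hσ, hpos, h1, h2⟩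
      exact ⟨hpos, σ, hσ, h1, h2⟩
  rw [hrw]
  apply Set.Finite.isCompact_biUnion (Set.toFinite K)
  intro σ _
  set S := {f : V → ℝ | (∀ v, 0 ≤ f v) ∧ (∀ v, f v ≠ 0 → v ∈ σ) ∧ ∑ v ∈ σ, f v = 1} with hS
  have hclosed : IsClosed S := by
    have h1 : IsClosed {f : V → ℝ | ∀ v, 0 ≤ f v} := by
      have : {f : V → ℝ | ∀ v, 0 ≤ f v} = ⋂ v, {f : V → ℝ | 0 ≤ f v} := by
        ext f; simp
      rw [this]
      exact isClosed_iInter fun v => isClosed_le continuous_const (continuous_apply v)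
    have h2 : IsClosed {f : V → ℝ | ∀ v, f v ≠ 0 → v ∈ σ} := by
      have : {f : V → ℝ | ∀ v, f v ≠ 0 → v ∈ σ} = ⋂ v, {f : V → ℝ | v ∈ σ ∨ f v = 0} := by
        ext f
        simp only [Set.mem_setOf_eq, Set.mem_iInter]
        constructor
        · intro h v
          by_cases hfv : f v = 0
          · exact Or.inr hfv
          · exact Or.inl (h v hfv)
        · intro h v hfv
          rcases h v with h' | h'
          · exact h'
          · exact absurd h' hfv
      rw [this]
      refine isClosed_iInter fun v => ?_
      by_cases hv : v ∈ σ
      · have : {f : V → ℝ | v ∈ σ ∨ f v = 0} = Set.univ := by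
          ext f; simp [hv]
        rw [this]; exact isClosed_univ
      · have : {f : V → ℝ | v ∈ σ ∨ f v = 0} = {f : V → ℝ | f v = 0} := by
          ext f; simp [hv]
        rw [this]
        exact isClosed_eq (continuous_apply v) continuous_const
    have h3 : IsClosed {f : V → ℝ | ∑ v ∈ σ, f v = 1} :=
      isClosed_eq (by exact continuous_finset_sum σ fun v _ => continuous_apply v)
        continuous_const
    have : S = {f : V → ℝ | ∀ v, 0 ≤ f v} ∩ ({f : V → ℝ | ∀ v, f v ≠ 0 → v ∈ σ}
        ∩ {f : V → ℝ | ∑ v ∈ σ, f v = 1}) := by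
      ext f; simp only [hS, Set.mem_setOf_eq, Set.mem_inter_iff]
    rw [this]
    exact h1.inter (h2.inter h3)
  have hsubset : S ⊆ Set.pi Set.univ (fun _ : V => Set.Icc (0:ℝ) 1) := by
    rintro f ⟨hpos, hsupp, hsum⟩ v _
    refine ⟨hpos v, ?_⟩
    by_cases hv : v ∈ σ
    · calc f v ≤ ∑ u ∈ σ, f u := Finset.single_le_sum (fun u _ => hpos u) hv
        _ = 1 := hsum
    · by_contra h
      push_neg at h
      have : f v ≠ 0 := by intro h'; rw [h'] at h; exact absurd h (by norm_num)
      exact hv (hsupp v this)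
  exact (isCompact_univ_pi fun _ => isCompact_Icc).of_isClosed_subset hclosed hsubset

section Sphere

variable (n d : ℕ) (ev : Fin (d+1) → Fin (n+1))

/-- the boundary-of-a-simplex complex on the vertices enumerated by `ev` -/
def Kbd : Set (Finset (Fin (n+1))) :=
  {σ | σ.Nonempty ∧ (↑σ : Set (Fin (n+1))) ⊆ Set.range ev ∧ σ ≠ Finset.image ev Finset.univ}

variable {n d ev}

lemma mem_bd_iff (hinj : Function.Injective ev) (f : Fin (n+1) → ℝ) :
    f ∈ geomReal (Kbd n d ev) ↔
      (∀ v, 0 ≤ f v) ∧ (∀ v, v ∉ Set.range ev → f v = 0) ∧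
      (∑ j : Fin (d+1), f (ev j)) = 1 ∧ (∃ j, f (ev j) = 0) := by
  classical
  have hFcoe : (↑(Finset.image ev Finset.univ) : Set (Fin (n+1))) = Set.range ev := by
    rw [Finset.coe_image, Finset.coe_univ, Set.image_univ]
  have hsumF : ∑ w ∈ Finset.image ev Finset.univ, f w = ∑ j : Fin (d+1), f (ev j) :=
    Finset.sum_image (fun x _ y _ h => hinj h)
  constructor
  · rintro ⟨hpos, σ, ⟨hne, hsub, hneq⟩, hsupp, hsum⟩
    have hσF : σ ⊆ Finset.image ev Finset.univ := by
      rw [← Finset.coe_subset, hFcoe]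
      exact hsub
    have hzero : ∀ v, v ∉ Set.range ev → f v = 0 := by
      intro v hv
      by_contra h
      exact hv (hsub (Finset.mem_coe.mpr (hsupp v h)))
    refine ⟨hpos, hzero, ?_, ?_⟩
    · rw [← hsumF, ← Finset.sum_subset hσF (fun x _ hx => ?_)]
      · exact hsum
      · by_contra h
        exact hx (hsupp x h)
    · obtain ⟨w, hwF, hwσ⟩ := Finset.exists_of_ssubset (lt_of_le_of_ne hσF hneq)
      obtain ⟨j, _, rfl⟩ := Finset.mem_image.mp hwF
      refine ⟨j, ?_⟩
      by_contra h
      exact hwσ (hsupp _ h)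
  · rintro ⟨hpos, hzero, hsum, j0, hj0⟩
    set σ := (Finset.image ev Finset.univ).erase (ev j0) with hσ
    have hσsum : ∑ w ∈ σ, f w = 1 := by
      rw [hσ, Finset.sum_erase _ hj0, hsumF]
      exact hsum
    have hsupp : ∀ v, f v ≠ 0 → v ∈ σ := by
      intro v hv
      rw [hσ, Finset.mem_erase]
      constructor
      · intro h
        rw [h] at hv
        exact hv hj0
      · rw [← Finset.mem_coe, hFcoe]
        by_contra h
        exact hv (hzero v h)
    refine ⟨hpos, σ, ⟨?_, ?_, ?_⟩, hsupp, hσsum⟩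
    · by_contra h
      rw [Finset.not_nonempty_iff_eq_empty] at h
      rw [h, Finset.sum_empty] at hσsum
      norm_num at hσsum
    · rw [← hFcoe]
      exact Finset.coe_subset.mpr (Finset.erase_subset _ _)
    · intro h
      have : ev j0 ∈ σ := h ▸ Finset.mem_image_of_mem ev (Finset.mem_univ j0)
      exact Finset.notMem_erase _ _ this

end Sphere


section Sphere2

variable {n d : ℕ}

/-- linear coordinates on the hyperplane of the boundary simplex -/
noncomputable def TE (ev : Fin (d+1) → Fin (n+1)) (f : Fin (n+1) → ℝ) :
    EuclideanSpace ℝ (Fin d) :=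
  (EuclideanSpace.equiv (Fin d) ℝ).symm (fun j => f (ev (Fin.succ j)) - f (ev 0))

lemma TE_apply (ev : Fin (d+1) → Fin (n+1)) (f : Fin (n+1) → ℝ) (j : Fin d) :
    (EuclideanSpace.equiv (Fin d) ℝ) (TE ev f) j = f (ev (Fin.succ j)) - f (ev 0) := by
  rw [TE, (EuclideanSpace.equiv (Fin d) ℝ).apply_symm_apply]

/-- the barycentric constant -/
noncomputable def bconst (d : ℕ) : ℝ := (((d : ℕ) : ℝ) + 1)⁻¹

lemma bconst_pos (d : ℕ) : 0 < bconst d := by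
  rw [bconst]; positivity

lemma bconst_mul (d : ℕ) : (((d : ℕ) : ℝ) + 1) * bconst d = 1 := by
  rw [bconst]
  field_simp

lemma sum_fin_const (d : ℕ) (c : ℝ) : ∑ _j : Fin (d+1), c = (((d : ℕ) : ℝ) + 1) * c := by
  rw [Finset.sum_const, Finset.card_univ, Fintype.card_fin, nsmul_eq_mul]
  push_cast
  ring

variable {ev : Fin (d+1) → Fin (n+1)}

lemma TE_ne_zero (hinj : Function.Injective ev) {f : Fin (n+1) → ℝ}
    (hf : f ∈ geomReal (Kbd n d ev)) : TE ev f ≠ 0 := by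
  rw [mem_bd_iff hinj] at hf
  obtain ⟨hpos, hzero, hsum, j0, hj0⟩ := hf
  intro h
  have hraw : ∀ j : Fin d, f (ev (Fin.succ j)) - f (ev 0) = 0 := by
    intro j
    rw [← TE_apply (ev := ev) f j, h, map_zero]
    rfl
  have hconst : ∀ j : Fin (d+1), f (ev j) = f (ev 0) := by
    intro j
    induction j using Fin.cases with
    | zero => rfl
    | succ i => have := hraw i; linarith
  have h0 : f (ev 0) = 0 := by rw [← hconst j0]; exact hj0
  rw [Finset.sum_congr rfl (fun j _ => hconst j)] at hsum
  rw [sum_fin_const, h0, mul_zero] at hsum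
  norm_num at hsum

noncomputable def phiFun (ev : Fin (d+1) → Fin (n+1)) (f : Fin (n+1) → ℝ) :
    EuclideanSpace ℝ (Fin d) :=
  ‖TE ev f‖⁻¹ • TE ev f

lemma phiFun_mem (hinj : Function.Injective ev) {f : Fin (n+1) → ℝ}
    (hf : f ∈ geomReal (Kbd n d ev)) : phiFun ev f ∈ sphereSpace d := by
  have hne := TE_ne_zero hinj hf
  have hnorm : ‖TE ev f‖ ≠ 0 := norm_ne_zero_iff.mpr hne
  show phiFun ev f ∈ Metric.sphere 0 1
  rw [mem_sphere_zero_iff_norm, phiFun, norm_smul, norm_inv, norm_norm]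
  field_simp

lemma rel_of_raw (hinj : Function.Injective ev) {f g : Fin (n+1) → ℝ}
    (hf : f ∈ geomReal (Kbd n d ev)) (hg : g ∈ geomReal (Kbd n d ev)) {c : ℝ}
    (hraw : ∀ j : Fin d, f (ev (Fin.succ j)) - f (ev 0) = c * (g (ev (Fin.succ j)) - g (ev 0))) :
    ∀ j : Fin (d+1), f (ev j) - bconst d = c * (g (ev j) - bconst d) := by
  rw [mem_bd_iff hinj] at hf hg
  obtain ⟨-, -, hsumf, -⟩ := hf
  obtain ⟨-, -, hsumg, -⟩ := hg
  set A := f (ev 0) - c * g (ev 0) with hA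
  have hAj : ∀ j : Fin (d+1), f (ev j) = c * g (ev j) + A := by
    intro j
    induction j using Fin.cases with
    | zero => rw [hA]; ring
    | succ i => have := hraw i; rw [hA]; linarith
  have hsum2 : (1:ℝ) = c * 1 + (((d : ℕ) : ℝ) + 1) * A := by
    calc (1:ℝ) = ∑ j : Fin (d+1), f (ev j) := hsumf.symm
      _ = ∑ j : Fin (d+1), (c * g (ev j) + A) := Finset.sum_congr rfl (fun j _ => hAj j)
      _ = c * (∑ j : Fin (d+1), g (ev j)) + ∑ _j : Fin (d+1), A := by
          rw [Finset.sum_add_distrib, Finset.mul_sum]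
      _ = c * 1 + (((d : ℕ) : ℝ) + 1) * A := by rw [hsumg, sum_fin_const]
  have hdpos : (0:ℝ) < ((d : ℕ) : ℝ) + 1 := by positivity
  have hAval : A = (1 - c) * bconst d := by
    have h1 : (((d : ℕ) : ℝ) + 1) * A = 1 - c := by linarith
    have h2 := bconst_mul d
    calc A = ((((d : ℕ) : ℝ) + 1) * bconst d) * A := by rw [h2]; ring
      _ = ((((d : ℕ) : ℝ) + 1) * A) * bconst d := by ring
      _ = (1 - c) * bconst d := by rw [h1]
  intro j
  rw [hAj j, hAval]
  ring

lemma inj_aux (hinj : Function.Injective ev) {f g : Fin (n+1) → ℝ}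
    (hf : f ∈ geomReal (Kbd n d ev)) (hg : g ∈ geomReal (Kbd n d ev)) {c : ℝ}
    (hc0 : 0 < c) (hc1 : c ≤ 1)
    (hrel : ∀ j : Fin (d+1), f (ev j) - bconst d = c * (g (ev j) - bconst d)) : f = g := by
  have hβ := bconst_pos d
  rw [mem_bd_iff hinj] at hf hg
  obtain ⟨hposf, hzerof, hsumf, j0, hj0⟩ := hf
  obtain ⟨hposg, hzerog, hsumg, -⟩ := hg
  have hc : c = 1 := by
    have h1 := hrel j0
    rw [hj0] at h1
    have h2 : -(bconst d) ≤ g (ev j0) - bconst d := by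
      have := hposg (ev j0); linarith
    have h3 : c * (-(bconst d)) ≤ c * (g (ev j0) - bconst d) :=
      mul_le_mul_of_nonneg_left h2 hc0.le
    nlinarith
  subst hc
  funext v
  by_cases hv : v ∈ Set.range ev
  · obtain ⟨j, rfl⟩ := hv
    have := hrel j
    linarith
  · rw [hzerof v hv, hzerog v hv]

lemma phi_injective (hinj : Function.Injective ev) {f g : Fin (n+1) → ℝ}
    (hf : f ∈ geomReal (Kbd n d ev)) (hg : g ∈ geomReal (Kbd n d ev))
    (h : phiFun ev f = phiFun ev g) : f = g := by
  have hnf : (0:ℝ) < ‖TE ev f‖ := norm_pos_iff.mpr (TE_ne_zero hinj hf)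
  have hng : (0:ℝ) < ‖TE ev g‖ := norm_pos_iff.mpr (TE_ne_zero hinj hg)
  rw [phiFun, phiFun] at h
  set c : ℝ := ‖TE ev f‖ * ‖TE ev g‖⁻¹ with hcdef
  have hc0 : 0 < c := by positivity
  have hTE : TE ev f = c • TE ev g := by
    have h5 := congrArg (fun x => ‖TE ev f‖ • x) h
    simp only [smul_smul] at h5
    rw [mul_inv_cancel₀ hnf.ne', one_smul] at h5
    exact h5
  have hraw : ∀ j : Fin d, f (ev (Fin.succ j)) - f (ev 0) = c * (g (ev (Fin.succ j)) - g (ev 0)) := by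
    intro j
    have h6 := congrArg (fun x => (EuclideanSpace.equiv (Fin d) ℝ) x j) hTE
    simp only [map_smul] at h6
    rw [TE_apply] at h6
    have h7 : (c • ((EuclideanSpace.equiv (Fin d) ℝ) (TE ev g))) j
        = c * (g (ev (Fin.succ j)) - g (ev 0)) := by
      rw [Pi.smul_apply, TE_apply, smul_eq_mul]
    rw [h6, ← h7]
  rcases le_total c 1 with hc1 | hc1
  · exact inj_aux hinj hf hg hc0 hc1 (rel_of_raw hinj hf hg hraw)
  · have hcinv : ∀ j : Fin d, g (ev (Fin.succ j)) - g (ev 0)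
        = c⁻¹ * (f (ev (Fin.succ j)) - f (ev 0)) := by
      intro j
      rw [hraw j]
      field_simp
    have h8 : g = f :=
      inj_aux hinj hg hf (by positivity) (by
        rw [inv_le_one_iff₀]; right; exact hc1) (rel_of_raw hinj hg hf hcinv)
    exact h8.symm

lemma phi_surjective (hinj : Function.Injective ev) (u : EuclideanSpace ℝ (Fin d))
    (hu : u ∈ sphereSpace d) :
    ∃ f ∈ geomReal (Kbd n d ev), phiFun ev f = u := by
  classical
  have hnu : ‖u‖ = 1 := mem_sphere_zero_iff_norm.mp hu
  set uc : Fin d → ℝ := (EuclideanSpace.equiv (Fin d) ℝ) u with huc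
  set c0 : ℝ := -(∑ j, uc j) * bconst d with hc0def
  set w : Fin (n+1) → ℝ := fun v =>
    (if v ∈ Set.range ev then c0 else 0) +
      ∑ j : Fin d, (if v = ev (Fin.succ j) then uc j else 0) with hwdef
  have hw0 : w (ev 0) = c0 := by
    rw [hwdef]
    simp only
    rw [if_pos (Set.mem_range_self 0), Finset.sum_eq_zero, add_zero]
    intro j _
    rw [if_neg]
    intro h
    exact Fin.succ_ne_zero j (hinj h).symm
  have hwsucc : ∀ i : Fin d, w (ev (Fin.succ i)) = c0 + uc i := by
    intro i
    rw [hwdef]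
    simp only
    rw [if_pos (Set.mem_range_self _)]
    congr 1
    rw [Finset.sum_eq_single i]
    · rw [if_pos rfl]
    · intro j _ hji
      rw [if_neg]
      intro h
      exact hji (Fin.succ_injective d (hinj h)).symm
    · intro h
      exact absurd (Finset.mem_univ i) h
  have hwz : ∀ v ∉ Set.range ev, w v = 0 := by
    intro v hv
    rw [hwdef]
    simp only
    rw [if_neg hv, Finset.sum_eq_zero, add_zero]
    intro j _
    rw [if_neg]
    intro h
    exact hv (h ▸ Set.mem_range_self _)
  have hsumw : ∑ j : Fin (d+1), w (ev j) = 0 := by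
    rw [Fin.sum_univ_succ]
    have h1 : ∑ i : Fin d, w (ev (Fin.succ i)) = (d : ℝ) * c0 + ∑ i : Fin d, uc i := by
      rw [Finset.sum_congr rfl (fun i _ => hwsucc i), Finset.sum_add_distrib,
        Finset.sum_const, Finset.card_univ, Fintype.card_fin, nsmul_eq_mul]
    rw [hw0, h1, hc0def]
    linear_combination (-(∑ j, uc j)) * bconst_mul d
  have hune : ∃ j : Fin d, uc j ≠ 0 := by
    by_contra h
    push_neg at h
    have huz : uc = 0 := funext h
    have : u = 0 := by
      have := (EuclideanSpace.equiv (Fin d) ℝ).map_eq_zero_iff.mp (huc ▸ huz)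
      exact this
    rw [this, norm_zero] at hnu
    norm_num at hnu
  have hneg : ∃ j : Fin (d+1), w (ev j) < 0 := by
    by_contra h
    push_neg at h
    have hz := (Finset.sum_eq_zero_iff_of_nonneg (fun j _ => h j)).mp hsumw
    obtain ⟨i, hi⟩ := hune
    apply hi
    have h1 : w (ev (Fin.succ i)) = 0 := hz _ (Finset.mem_univ _)
    have h2 : w (ev 0) = 0 := hz _ (Finset.mem_univ _)
    rw [hwsucc i] at h1
    rw [hw0] at h2
    linarith
  set M : ℝ := Finset.univ.sup' Finset.univ_nonempty (fun j : Fin (d+1) => -(w (ev j))) with hMdef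
  have hMpos : 0 < M := by
    obtain ⟨j, hj⟩ := hneg
    calc (0:ℝ) < -(w (ev j)) := by linarith
      _ ≤ M := by
          rw [hMdef]
          exact Finset.le_sup' (fun j : Fin (d+1) => -(w (ev j))) (Finset.mem_univ j)
  have hMb : ∀ j : Fin (d+1), -M ≤ w (ev j) := by
    intro j
    have := Finset.le_sup' (fun j : Fin (d+1) => -(w (ev j))) (Finset.mem_univ j)
    rw [← hMdef] at this
    linarith
  set t : ℝ := ((((d:ℕ):ℝ) + 1) * M)⁻¹ with htdef
  have hdpos : (0:ℝ) < ((d:ℕ):ℝ) + 1 := by positivity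
  have ht : 0 < t := by rw [htdef]; positivity
  have htM : t * M = bconst d := by
    rw [htdef, bconst, mul_inv, mul_assoc, inv_mul_cancel₀ hMpos.ne', mul_one]
  set f0 : Fin (n+1) → ℝ := fun v =>
    (if v ∈ Set.range ev then bconst d else 0) + t * w v with hf0def
  have hf0r : ∀ j : Fin (d+1), f0 (ev j) = bconst d + t * w (ev j) := by
    intro j
    rw [hf0def]
    simp only
    rw [if_pos (Set.mem_range_self _)]
  have hmem : f0 ∈ geomReal (Kbd n d ev) := by
    rw [mem_bd_iff hinj]
    refine ⟨?_, ?_, ?_, ?_⟩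
    · intro v
      by_cases hv : v ∈ Set.range ev
      · obtain ⟨j, rfl⟩ := hv
        rw [hf0r j]
        have h1 := hMb j
        have h2 : t * (-M) ≤ t * w (ev j) := mul_le_mul_of_nonneg_left h1 ht.le
        have h3 : t * M = bconst d := htM
        linarith
      · rw [hf0def]
        simp only
        rw [if_neg hv, hwz v hv, mul_zero, add_zero]
    · intro v hv
      rw [hf0def]
      simp only
      rw [if_neg hv, hwz v hv, mul_zero, add_zero]
    · rw [Finset.sum_congr rfl (fun j _ => hf0r j), Finset.sum_add_distrib]
      have h1 : ∑ _j : Fin (d+1), bconst d = 1 := by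
        rw [sum_fin_const]
        exact bconst_mul d
      have h2 : ∑ j : Fin (d+1), t * w (ev j) = 0 := by
        rw [← Finset.mul_sum, hsumw, mul_zero]
      rw [h1, h2, add_zero]
    · obtain ⟨j, -, hj⟩ := Finset.exists_mem_eq_sup' Finset.univ_nonempty
        (fun j : Fin (d+1) => -(w (ev j)))
      refine ⟨j, ?_⟩
      rw [hf0r j]
      have : w (ev j) = -M := by rw [hMdef, hj]; ring
      rw [this]
      linarith [htM]
  refine ⟨f0, hmem, ?_⟩
  have hTEf0 : TE ev f0 = t • u := by
    apply (EuclideanSpace.equiv (Fin d) ℝ).injective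
    funext j
    rw [TE_apply]
    have hL : f0 (ev (Fin.succ j)) - f0 (ev 0) = t * uc j := by
      rw [hf0r (Fin.succ j), hf0r 0, hwsucc j, hw0]
      ring
    rw [hL, map_smul]
    rw [Pi.smul_apply, smul_eq_mul, huc]
  have hnorm : ‖TE ev f0‖ = t := by
    rw [hTEf0, norm_smul, Real.norm_eq_abs, abs_of_pos ht, hnu, mul_one]
  rw [phiFun, hnorm, hTEf0, smul_smul, inv_mul_cancel₀ ht.ne', one_smul]

noncomputable def sphereHomeo (n d : ℕ) (ev : Fin (d+1) → Fin (n+1))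
    (hinj : Function.Injective ev) :
    ↥(geomReal (Kbd n d ev)) ≃ₜ ↥(sphereSpace d) := by
  haveI : CompactSpace ↥(geomReal (Kbd n d ev)) :=
    isCompact_iff_compactSpace.mp (isCompact_geomReal _)
  have hbij : Function.Bijective (fun f : ↥(geomReal (Kbd n d ev)) =>
      (⟨phiFun ev f.1, phiFun_mem hinj f.2⟩ : ↥(sphereSpace d))) := by
    constructor
    · rintro ⟨f, hf⟩ ⟨g, hg⟩ h
      rw [Subtype.mk.injEq] at h
      exact Subtype.ext (phi_injective hinj hf hg h)
    · rintro ⟨u, hu⟩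
      obtain ⟨f, hf, hphi⟩ := phi_surjective hinj u hu
      exact ⟨⟨f, hf⟩, Subtype.ext hphi⟩
  have hcont : Continuous (fun f : ↥(geomReal (Kbd n d ev)) =>
      (⟨phiFun ev f.1, phiFun_mem hinj f.2⟩ : ↥(sphereSpace d))) := by
    apply Continuous.subtype_mk
    have hTEc : Continuous fun f : Fin (n+1) → ℝ => TE ev f := by
      apply (EuclideanSpace.equiv (Fin d) ℝ).symm.continuous.comp
      exact continuous_pi fun j => (continuous_apply _).sub (continuous_apply _)
    have hc1 : Continuous fun f : ↥(geomReal (Kbd n d ev)) => TE ev f.1 :=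
      hTEc.comp continuous_subtype_val
    have hc2 : Continuous fun f : ↥(geomReal (Kbd n d ev)) => ‖TE ev f.1‖⁻¹ :=
      Continuous.inv₀ hc1.norm (fun f => norm_ne_zero_iff.mpr (TE_ne_zero hinj f.2))
    exact hc2.smul hc1
  exact Continuous.homeoOfEquivCompactToT2 (f := Equiv.ofBijective _ hbij) hcont

end Sphere2

def evmap (n d : ℕ) (hb : d + (d+1)/2 ≤ n) : Fin (d+1) → Fin (n+1) :=
  fun j => ⟨(j:ℕ) + ((j:ℕ)+1)/2, by have := j.isLt; omega⟩

lemma evmap_inj (n d : ℕ) (hb : d + (d+1)/2 ≤ n) : Function.Injective (evmap n d hb) := by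
  intro x y h
  have h' := congrArg Fin.val h
  simp only [evmap] at h'
  apply Fin.ext
  omega

lemma evmap_range (n d : ℕ) (hb : d + (d+1)/2 ≤ n) (hnd : 2*n = 3*d + 2 ∨ 2*n = 3*d + 1) :
    Set.range (evmap n d hb) = {w : Fin (n+1) | (w:ℕ) % 3 ≠ 1} := by
  ext w
  constructor
  · rintro ⟨j, rfl⟩
    have hj := j.isLt
    show ((evmap n d hb j : ℕ)) % 3 ≠ 1
    simp only [evmap]
    omega
  · intro hw
    have hw3 : (w:ℕ) % 3 ≠ 1 := hw
    have hwn := w.isLt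
    refine ⟨⟨2*(w:ℕ)/3, by omega⟩, ?_⟩
    apply Fin.ext
    simp only [evmap]
    omega

lemma thetaU_W_eq (n d : ℕ) (hb : d + (d+1)/2 ≤ n) (hnd : 2*n = 3*d+2 ∨ 2*n = 3*d+1) :
    thetaU n {w : Fin (n+1) | (w:ℕ) % 3 ≠ 1} = Kbd n d (evmap n d hb) := by
  have hrange := evmap_range n d hb hnd
  have hF : ∀ x : Fin (n+1),
      x ∈ Finset.image (evmap n d hb) Finset.univ ↔ ((x:ℕ) % 3 ≠ 1) := by
    intro x
    rw [Finset.mem_image]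
    constructor
    · rintro ⟨j, -, rfl⟩
      have h1 : evmap n d hb j ∈ Set.range (evmap n d hb) := Set.mem_range_self j
      rw [hrange] at h1
      exact h1
    · intro hx
      have h1 : x ∈ Set.range (evmap n d hb) := by rw [hrange]; exact hx
      obtain ⟨j, rfl⟩ := h1
      exact ⟨j, Finset.mem_univ j, rfl⟩
  ext σ
  constructor
  · rintro ⟨⟨hne, e, heP, havoid⟩, hsub⟩
    refine ⟨hne, by rw [hrange]; exact hsub, ?_⟩
    intro hσF
    obtain ⟨i, hi, rfl⟩ := pathEdges_eq heP
    by_cases h3 : i % 3 = 1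
    · have hx : (⟨i+1, by omega⟩ : Fin (n+1)) ∈ σ := by
        rw [hσF, hF]
        show (i+1) % 3 ≠ 1
        omega
      apply havoid _ hx
      rw [mem_edg]
      right
      rfl
    · have hx : (⟨i, by omega⟩ : Fin (n+1)) ∈ σ := by
        rw [hσF, hF]
        exact h3
      apply havoid _ hx
      rw [mem_edg]
      left
      rfl
  · rintro ⟨hne, hsub, hneq⟩
    have hsubW : (↑σ : Set (Fin (n+1))) ⊆ {w : Fin (n+1) | (w:ℕ) % 3 ≠ 1} := by
      rw [← hrange]; exact hsub
    have hsubF : σ ⊆ Finset.image (evmap n d hb) Finset.univ := by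
      intro x hx
      rw [hF]
      exact hsubW (Finset.mem_coe.mpr hx)
    obtain ⟨w, hwF, hwσ⟩ := Finset.exists_of_ssubset (lt_of_le_of_ne hsubF hneq)
    have hw3 : (w:ℕ) % 3 ≠ 1 := (hF w).mp hwF
    have hwn := w.isLt
    have hn3 : n % 3 ≠ 0 := by omega
    refine ⟨⟨hne, ?_⟩, hsubW⟩
    by_cases h0 : (w:ℕ) % 3 = 0
    · have hwlt : (w:ℕ) < n := by omega
      refine ⟨edg n (w:ℕ) hwlt, edg_mem _, ?_⟩
      intro u hu
      rw [mem_edg]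
      rintro (h | h)
      · exact hwσ ((Fin.ext h : u = w) ▸ hu)
      · have := hsubW (Finset.mem_coe.mpr hu)
        have h3 : (u:ℕ) % 3 ≠ 1 := this
        omega
    · have h2 : (w:ℕ) % 3 = 2 := by omega
      have hwlt : (w:ℕ) - 1 < n := by omega
      refine ⟨edg n ((w:ℕ)-1) hwlt, edg_mem _, ?_⟩
      intro u hu
      rw [mem_edg]
      rintro (h | h)
      · have := hsubW (Finset.mem_coe.mpr hu)
        have h3 : (u:ℕ) % 3 ≠ 1 := this
        omega
      · have huw : u = w := Fin.ext (by omega)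
        exact hwσ (huw ▸ hu)

noncomputable def sphere_case (n d : ℕ) (hb : d + (d+1)/2 ≤ n)
    (hnd : 2*n = 3*d+2 ∨ 2*n = 3*d+1) :
    ContinuousMap.HomotopyEquiv ↥(geomReal (thetaComplex (pathEdges n))) ↥(sphereSpace d) := by
  have hWU : U1 n (n+1) = {w : Fin (n+1) | (w:ℕ) % 3 ≠ 1} := by
    ext w
    have := w.isLt
    simp only [U1, Set.mem_setOf_eq]
    omega
  refine ContinuousMap.HomotopyEquiv.trans ((phase1 n (n+1)).symm) ?_
  refine ContinuousMap.HomotopyEquiv.trans (setEquiv _ _ ?_)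
    ((sphereHomeo n d (evmap n d hb) (evmap_inj n d hb)).toHomotopyEquiv)
  rw [hWU, thetaU_W_eq n d hb hnd]

end ThetaPf

/-- `Θ(I_n)` is contractible if `n = 3k`, is homotopy
equivalent to `S^{2k-1}` if `n = 3k+1` (the unit sphere in `ℝ^{2k}`), and is
homotopy equivalent to `S^{2k}` (the unit sphere in `ℝ^{2k+1}`) if `n = 3k+2`. -/
theorem theta_path_graph (n k : ℕ) (hn : 1 ≤ n) :
    (n = 3 * k → ContractibleSpace (↥(geomReal (thetaComplex (pathEdges n))))) ∧
    (n = 3 * k + 1 → Nonempty (ContinuousMap.HomotopyEquiv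
      (↥(geomReal (thetaComplex (pathEdges n)))) (↥(sphereSpace (2 * k))))) ∧
    (n = 3 * k + 2 → Nonempty (ContinuousMap.HomotopyEquiv
      (↥(geomReal (thetaComplex (pathEdges n)))) (↥(sphereSpace (2 * k + 1))))) := by
  refine ⟨?_, ?_, ?_⟩
  · intro h
    exact ThetaPf.contractible_case n (by omega) hn
  · intro h
    exact ⟨ThetaPf.sphere_case n (2*k) (by omega) (by omega)⟩
  · intro h
    exact ⟨ThetaPf.sphere_case n (2*k+1) (by omega) (by omega)⟩
end

section
/- For every n ≥ 1, Θ(Cube(n, n−1)) is homotopy equivalent to the sphere S^{n−1}. -/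
/-- The hypergraph `Cube(n,k)`: vertices are the vertices `{0,1}^n` of the
`n`-cube, and hyperedges are the vertex sets of the `k`-dimensional faces,
i.e. the subsets obtained by fixing `n - k` of the coordinates. -/
def cubeEdges (n k : ℕ) : Set (Set (Fin n → Bool)) :=
  {e | ∃ (s : Finset (Fin n)) (g : Fin n → Bool),
    s.card = n - k ∧ e = {f | ∀ i ∈ s, f i = g i}}

/-! Every simplex of `Θ(Cube(n, n-1))` avoids a facet `{v | v i = b}` of the cube, hence lies in the
opposite facet, so the realization is the union of one full simplex per facet. The barycentre
map, with vertex `v` placed at `(±1)ᵢ ∈ [-1,1]ⁿ`, sends it to the boundary of the cube, i.e. the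
sup-norm unit sphere. Multilinear interpolation weights give a right inverse, and the composite in
the other order is joined to the identity by straight segments, because a point and its image lie
in the same facet simplex. Radial projection identifies the sup-norm and Euclidean unit spheres. -/

open Finset Function Metric

theorem ContinuousMap.Homotopic.of_segment_subset {X E : Type*} [TopologicalSpace X]
    [AddCommGroup E] [TopologicalSpace E] [IsTopologicalAddGroup E] [Module ℝ E]
    [ContinuousSMul ℝ E] {S : Set E} {f g : C(X, S)}
    (h : ∀ x, segment ℝ (f x : E) (g x) ⊆ S) : f.Homotopic g :=
  ⟨{ toFun := fun p => ⟨AffineMap.lineMap (f p.2 : E) (g p.2) (p.1 : ℝ),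
        h p.2 (lineMap_mem_segment ℝ _ _ p.1.2)⟩
     continuous_toFun := by
       refine Continuous.subtype_mk ?_ _
       simp only [AffineMap.lineMap_apply_module]
       fun_prop
     map_zero_left := fun x => by simp
     map_one_left := fun x => by simp }⟩

namespace ContinuousLinearEquiv

variable {E F : Type*} [NormedAddCommGroup E] [NormedSpace ℝ E]
  [NormedAddCommGroup F] [NormedSpace ℝ F] (e : E ≃L[ℝ] F)

theorem map_ne_zero_of_mem_unitSphere (x : sphere (0 : E) 1) : e x ≠ 0 :=
  e.map_ne_zero_iff.2 (ne_zero_of_mem_unit_sphere x)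

noncomputable def unitSphereMap : C(sphere (0 : E) 1, sphere (0 : F) 1) where
  toFun x := ⟨‖e x‖⁻¹ • e x, by
    simpa using norm_smul_inv_norm (𝕜 := ℝ) (e.map_ne_zero_of_mem_unitSphere x)⟩
  continuous_toFun := by
    have he : Continuous fun x : sphere (0 : E) 1 => e x := by fun_prop
    exact ((he.norm.inv₀ fun x => norm_ne_zero_iff.2 (e.map_ne_zero_of_mem_unitSphere x)).smul
      he).subtype_mk _

theorem symm_unitSphereMap_unitSphereMap (x : sphere (0 : E) 1) :
    e.symm.unitSphereMap (e.unitSphereMap x) = x := by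
  have hne : ‖e x‖ ≠ 0 := norm_ne_zero_iff.2 (e.map_ne_zero_of_mem_unitSphere x)
  ext1
  change ‖e.symm (‖e x‖⁻¹ • e x)‖⁻¹ • e.symm (‖e x‖⁻¹ • e x) = x
  rw [map_smul, symm_apply_apply, norm_smul, norm_inv, norm_norm, norm_eq_of_mem_sphere,
    mul_one, inv_inv, smul_smul, mul_inv_cancel₀ hne, one_smul]

noncomputable def unitSphereHomeomorph : sphere (0 : E) 1 ≃ₜ sphere (0 : F) 1 where
  toFun := e.unitSphereMap
  invFun := e.symm.unitSphereMap
  left_inv := e.symm_unitSphereMap_unitSphereMap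
  right_inv := e.symm.symm_unitSphereMap_unitSphereMap
  continuous_toFun := e.unitSphereMap.continuous
  continuous_invFun := e.symm.unitSphereMap.continuous

end ContinuousLinearEquiv

section ThetaComplex

variable {V : Type*} [Fintype V]

def faceSimplex (s : Set V) : Set (V → ℝ) := {f ∈ stdSimplex ℝ V | support f ⊆ s}

theorem convex_faceSimplex (s : Set V) : Convex ℝ (faceSimplex s) := by
  refine (convex_stdSimplex ℝ V).inter fun f hf g hg a b _ _ _ => ?_
  exact (support_add _ _).trans (Set.union_subset
    ((support_const_smul_subset a f).trans hf) ((support_const_smul_subset b g).trans hg))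

theorem geomReal_thetaComplex (H : Set (Set V)) :
    geomReal (thetaComplex H) = ⋃ h ∈ H, faceSimplex hᶜ := by
  classical
  ext f
  simp only [Set.mem_iUnion, exists_prop]
  constructor
  · rintro ⟨hf0, σ, ⟨-, h, hH, hσh⟩, hσ, hsum⟩
    have hsupp : ∀ v, f v ≠ 0 → v ∈ σ := hσ
    refine ⟨h, hH, ⟨hf0, ?_⟩, fun v hv => hσh v (hsupp v hv)⟩
    rw [← hsum]
    exact (sum_subset (subset_univ σ) fun v _ hv => not_not.1 (mt (hsupp v) hv)).symm
  · rintro ⟨h, hH, ⟨hf0, hsum⟩, hsupp⟩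
    have hσ : ∑ v ∈ univ.filter (f · ≠ 0), f v = 1 := by rw [sum_filter_ne_zero, hsum]
    refine ⟨hf0, univ.filter (f · ≠ 0), ⟨?_, h, hH, fun v hv => hsupp (mem_filter.1 hv).2⟩,
      fun v hv => by simpa using hv, hσ⟩
    exact nonempty_of_sum_ne_zero (hσ.symm ▸ one_ne_zero)

end ThetaComplex

def boolSign (b : Bool) : ℝ := if b then 1 else -1

@[simp] theorem boolSign_true : boolSign true = 1 := rfl

@[simp] theorem boolSign_false : boolSign false = -1 := rfl

theorem abs_boolSign (b : Bool) : |boolSign b| = 1 := by cases b <;> simp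

theorem boolSign_not (b : Bool) : boolSign (!b) = -boolSign b := by cases b <;> simp

theorem boolSign_mul_self (b : Bool) : boolSign b * boolSign b = 1 := by cases b <;> simp

section Cube

variable {ι : Type*} [Fintype ι]

noncomputable def cubeWeights (x : ι → ℝ) : (ι → Bool) → ℝ :=
  fun v => ∏ i, (1 + boolSign (v i) * x i) / 2

theorem continuous_cubeWeights : Continuous (cubeWeights (ι := ι)) := by
  unfold cubeWeights; fun_prop

theorem cubeWeights_nonneg {x : ι → ℝ} (hx : ‖x‖ ≤ 1) (v : ι → Bool) : 0 ≤ cubeWeights x v := by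
  refine prod_nonneg fun i _ => ?_
  have hxi : |boolSign (v i) * x i| ≤ 1 := by
    rw [abs_mul, abs_boolSign, one_mul, ← Real.norm_eq_abs]
    exact (norm_le_pi_norm x i).trans hx
  linarith [(abs_le.1 hxi).1]

theorem support_cubeWeights_subset {x : ι → ℝ} {i : ι} {b : Bool} (hxi : x i = boolSign b) :
    support (cubeWeights x) ⊆ {v | v i = b} := by
  intro v hv
  by_contra hvi
  refine hv (prod_eq_zero (mem_univ i) ?_)
  rw [Bool.eq_not_of_ne hvi, boolSign_not, hxi, neg_mul, boolSign_mul_self]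
  ring

theorem exists_apply_eq_boolSign_of_norm_eq_one {x : ι → ℝ} (hx : ‖x‖ = 1) :
    ∃ i b, x i = boolSign b := by
  have : Nonempty ι := by
    by_contra h
    rw [not_nonempty_iff] at h
    simp [Subsingleton.elim x 0] at hx
  obtain ⟨i, hi⟩ := (IsGreatest.pi_norm x).1
  replace hi : |x i| = 1 := by simpa [hx] using hi
  rcases abs_eq_abs.1 (hi.trans (abs_boolSign true).symm) with h | h
  · exact ⟨i, true, h⟩
  · exact ⟨i, false, by simpa using h⟩

variable [DecidableEq ι]

def cubeBary (f : (ι → Bool) → ℝ) : ι → ℝ := fun i => ∑ v, boolSign (v i) * f v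

theorem continuous_cubeBary : Continuous (cubeBary (ι := ι)) := by
  unfold cubeBary; fun_prop

theorem sum_prod_apply_bool (c : ι → Bool → ℝ) :
    ∑ v : ι → Bool, ∏ i, c i (v i) = ∏ i, (c i true + c i false) := by
  rw [← Fintype.prod_sum]
  simp only [Fintype.sum_bool]

theorem sum_cubeWeights (x : ι → ℝ) : ∑ v, cubeWeights x v = 1 := by
  simp only [cubeWeights]
  rw [sum_prod_apply_bool fun i b => (1 + boolSign b * x i) / 2]
  exact prod_eq_one fun i _ => by simp; ring

theorem cubeBary_cubeWeights (x : ι → ℝ) : cubeBary (cubeWeights x) = x := by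
  funext i
  have hmul (v : ι → Bool) : boolSign (v i) * cubeWeights x v =
      ∏ j, (if j = i then boolSign (v j) else 1) * ((1 + boolSign (v j) * x j) / 2) := by
    simp only [cubeWeights]
    rw [prod_mul_distrib, prod_ite_eq' univ i, if_pos (mem_univ i)]
  simp only [cubeBary, hmul]
  rw [sum_prod_apply_bool fun j b =>
    (if j = i then boolSign b else 1) * ((1 + boolSign b * x j) / 2)]
  rw [prod_congr rfl fun j _ => (?_ : _ = if j = i then x j else 1), prod_ite_eq' univ i,
    if_pos (mem_univ i)]
  split_ifs <;> simp <;> ring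

theorem cubeWeights_mem_faceSimplex {x : ι → ℝ} (hx : ‖x‖ ≤ 1) {i : ι} {b : Bool}
    (hxi : x i = boolSign b) : cubeWeights x ∈ faceSimplex {v : ι → Bool | v i = b} :=
  ⟨⟨cubeWeights_nonneg hx, sum_cubeWeights x⟩, support_cubeWeights_subset hxi⟩

theorem norm_cubeBary_le {f : (ι → Bool) → ℝ} (hf : f ∈ stdSimplex ℝ (ι → Bool)) :
    ‖cubeBary f‖ ≤ 1 := by
  refine (pi_norm_le_iff_of_nonneg zero_le_one).2 fun i => ?_
  calc ‖cubeBary f i‖ ≤ ∑ v, |boolSign (v i) * f v| := abs_sum_le_sum_abs _ _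
    _ = ∑ v, f v := by simp only [abs_mul, abs_boolSign, one_mul, abs_of_nonneg (hf.1 _)]
    _ = 1 := hf.2

theorem cubeBary_apply_of_mem_faceSimplex {f : (ι → Bool) → ℝ} {i : ι} {b : Bool}
    (hf : f ∈ faceSimplex {v : ι → Bool | v i = b}) : cubeBary f i = boolSign b := by
  have hvi (v : ι → Bool) : boolSign (v i) * f v = boolSign b * f v := by
    by_cases hv : f v = 0
    · simp [hv]
    · rw [show v i = b from hf.2 hv]
  rw [cubeBary, sum_congr rfl fun v _ => hvi v, ← mul_sum, hf.1.2, mul_one]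

theorem norm_cubeBary_of_mem_faceSimplex {f : (ι → Bool) → ℝ} {i : ι} {b : Bool}
    (hf : f ∈ faceSimplex {v : ι → Bool | v i = b}) : ‖cubeBary f‖ = 1 := by
  refine le_antisymm (norm_cubeBary_le hf.1) ?_
  simpa [cubeBary_apply_of_mem_faceSimplex hf, abs_boolSign] using norm_le_pi_norm (cubeBary f) i

variable (ι) in
def facetSimplices : Set ((ι → Bool) → ℝ) := ⋃ (i : ι) (b : Bool), faceSimplex {v | v i = b}

theorem mem_facetSimplices {f : (ι → Bool) → ℝ} :
    f ∈ facetSimplices ι ↔ ∃ i b, f ∈ faceSimplex {v : ι → Bool | v i = b} := by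
  simp only [facetSimplices, Set.mem_iUnion]

theorem cubeBary_mem_unitSphere {f : (ι → Bool) → ℝ} (hf : f ∈ facetSimplices ι) :
    cubeBary f ∈ sphere (0 : ι → ℝ) 1 := by
  obtain ⟨i, b, hf⟩ := mem_facetSimplices.1 hf
  simpa using norm_cubeBary_of_mem_faceSimplex hf

theorem cubeWeights_mem_facetSimplices {x : ι → ℝ} (hx : x ∈ sphere (0 : ι → ℝ) 1) :
    cubeWeights x ∈ facetSimplices ι := by
  rw [mem_sphere_zero_iff_norm] at hx
  obtain ⟨i, b, hxi⟩ := exists_apply_eq_boolSign_of_norm_eq_one hx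
  exact mem_facetSimplices.2 ⟨i, b, cubeWeights_mem_faceSimplex hx.le hxi⟩

noncomputable def cubeBarySphere : C(facetSimplices ι, sphere (0 : ι → ℝ) 1) :=
  ⟨fun f => ⟨cubeBary f, cubeBary_mem_unitSphere f.2⟩,
    (continuous_cubeBary.comp continuous_subtype_val).subtype_mk _⟩

noncomputable def cubeWeightsFacetSimplices : C(sphere (0 : ι → ℝ) 1, facetSimplices ι) :=
  ⟨fun x => ⟨cubeWeights x, cubeWeights_mem_facetSimplices x.2⟩,
    (continuous_cubeWeights.comp continuous_subtype_val).subtype_mk _⟩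

theorem cubeBarySphere_comp_cubeWeightsFacetSimplices :
    cubeBarySphere.comp cubeWeightsFacetSimplices = ContinuousMap.id (sphere (0 : ι → ℝ) 1) :=
  ContinuousMap.ext fun x => Subtype.ext (cubeBary_cubeWeights x.1)

theorem cubeWeightsFacetSimplices_comp_cubeBarySphere_homotopic :
    (cubeWeightsFacetSimplices.comp cubeBarySphere).Homotopic
      (ContinuousMap.id (facetSimplices ι)) := by
  refine ContinuousMap.Homotopic.of_segment_subset fun f => ?_
  obtain ⟨i, b, hf⟩ := mem_facetSimplices.1 f.2
  have hwf := cubeWeights_mem_faceSimplex (norm_cubeBary_le hf.1)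
    (cubeBary_apply_of_mem_faceSimplex hf)
  exact ((convex_faceSimplex _).segment_subset hwf hf).trans
    fun g hg => mem_facetSimplices.2 ⟨i, b, hg⟩

variable (ι) in
noncomputable def facetSimplicesHomotopyEquivSphere :
    ContinuousMap.HomotopyEquiv (facetSimplices ι) (sphere (0 : ι → ℝ) 1) where
  toFun := cubeBarySphere
  invFun := cubeWeightsFacetSimplices
  left_inv := cubeWeightsFacetSimplices_comp_cubeBarySphere_homotopic
  right_inv := by rw [cubeBarySphere_comp_cubeWeightsFacetSimplices]

end Cube

theorem cubeEdges_sub_one {n : ℕ} (hn : 1 ≤ n) :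
    cubeEdges n (n - 1) = Set.range fun p : Fin n × Bool => {v | v p.1 = p.2} := by
  ext e
  constructor
  · rintro ⟨s, g, hs, rfl⟩
    obtain ⟨i, rfl⟩ := card_eq_one.1 (hs.trans (by omega))
    exact ⟨(i, g i), by simp⟩
  · rintro ⟨⟨i, b⟩, rfl⟩
    exact ⟨{i}, fun _ => b, by simp; omega, by simp⟩

theorem geomReal_thetaComplex_cubeEdges {n : ℕ} (hn : 1 ≤ n) :
    geomReal (thetaComplex (cubeEdges n (n - 1))) = facetSimplices (Fin n) := by
  have hcompl (i : Fin n) (b : Bool) : {v : Fin n → Bool | v i = b}ᶜ = {v | v i = !b} := by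
    ext v; exact Bool.eq_not.symm
  ext f
  simp only [geomReal_thetaComplex, cubeEdges_sub_one hn, Set.biUnion_range, Set.mem_iUnion,
    Prod.exists, hcompl, mem_facetSimplices, Bool.exists_bool, Bool.not_true, Bool.not_false]
  exact exists_congr fun _ => or_comm

/-- For every `n ≥ 1`, `Θ(Cube(n, n-1))` is homotopy
equivalent to the sphere `S^{n-1}` (the unit sphere in `ℝⁿ`). -/
theorem theta_cube_codim_one (n : ℕ) (hn : 1 ≤ n) :
    Nonempty (ContinuousMap.HomotopyEquiv
      (↥(geomReal (thetaComplex (cubeEdges n (n - 1)))))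
      (↥(sphereSpace n))) :=
  ⟨((Homeomorph.setCongr (geomReal_thetaComplex_cubeEdges hn)).toHomotopyEquiv.trans
    (facetSimplicesHomotopyEquivSphere (Fin n))).trans
    (EuclideanSpace.equiv (Fin n) ℝ).symm.unitSphereHomeomorph.toHomotopyEquiv⟩
end

section
/- Let 𝓗 be a finite hypergraph acted on by a finite p-group G (G acts on the vertices carrying hyperedges to hyperedges). Then χ(Θ(𝓗)) ≡ χ(Θ(𝓗/G)) (mod p). -/
/-- The Euler characteristic of a complex of (nonempty) finite simplices:
`χ(K) = Σ_{σ ∈ K} (-1)^(|σ|-1)`. -/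
noncomputable def eulerChar {V : Type*} (K : Set (Finset V)) : ℤ :=
  ∑ᶠ σ ∈ K, (-1 : ℤ) ^ (σ.card - 1)

open MulAction Finset Pointwise
private lemma negOne_pow_prime_pow {p : ℕ} (hp : p.Prime) (k : ℕ) :
    ((-1 : ZMod p)) ^ (p ^ k) = -1 := by
  rcases hp.eq_two_or_odd' with h2 | hodd
  · subst h2
    have h1 : (-1 : ZMod 2) = 1 := by decide
    rw [h1, one_pow]
  · exact (hodd.pow).neg_one_pow

private lemma card_orbit_dvd' {G X : Type*} [Group G] [Finite G] [Finite X] [MulAction G X]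
    (y : X) : Nat.card (orbit G y) ∣ Nat.card G := by
  rw [Nat.card_congr (orbitEquivQuotientStabilizer G y), ← Subgroup.index_eq_card]
  exact Subgroup.index_dvd_card _

private lemma sum_eq_sum_fixed {p : ℕ} (hp : p.Prime) {G X : Type*} [Group G] [Finite G]
    [Fintype X] [MulAction G X]
    [DecidablePred (fun x : X => ∀ g : G, g • x = x)] (hpG : IsPGroup p G) (f : X → ZMod p)
    (hf : ∀ (g : G) (x : X), f (g • x) = f x) :
    ∑ x, f x = ∑ x ∈ Finset.univ.filter (fun x => ∀ g : G, g • x = x), f x := by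
  classical
  haveI : Fact p.Prime := ⟨hp⟩
  obtain ⟨n, hn⟩ := IsPGroup.iff_card.mp hpG
  have key := Finset.sum_fiberwise (Finset.univ : Finset X)
      (fun x => Quotient.mk (MulAction.orbitRel G X) x) f
  have key2 := Finset.sum_fiberwise
      (Finset.univ.filter (fun x : X => ∀ g : G, g • x = x))
      (fun x => Quotient.mk (MulAction.orbitRel G X) x) f
  rw [← key, ← key2]
  refine Finset.sum_congr rfl fun ω _ => ?_
  induction ω using Quotient.inductionOn with
  | h y =>
    have hfib : ∀ x : X, (Quotient.mk (MulAction.orbitRel G X) x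
        = Quotient.mk (MulAction.orbitRel G X) y) ↔ x ∈ orbit G y := by
      intro x
      constructor
      · intro h; exact MulAction.orbitRel_apply.mp (Quotient.exact h)
      · intro h; exact Quotient.sound (MulAction.orbitRel_apply.mpr h)
    by_cases hy : ∀ g : G, g • y = y
    · have horb : orbit G y = {y} := by
        ext x; simp only [MulAction.mem_orbit_iff, Set.mem_singleton_iff]
        constructor
        · rintro ⟨g, rfl⟩; exact hy g
        · rintro rfl; exact ⟨1, one_smul _ _⟩
      have h1 : (Finset.univ.filter (fun x : X => Quotient.mk (MulAction.orbitRel G X) x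
          = Quotient.mk (MulAction.orbitRel G X) y)) = {y} := by
        ext x; simp [hfib, horb]
      have h2 : ((Finset.univ.filter (fun x : X => ∀ g : G, g • x = x)).filter
          (fun x : X => Quotient.mk (MulAction.orbitRel G X) x
          = Quotient.mk (MulAction.orbitRel G X) y)) = {y} := by
        ext x; simp only [Finset.mem_filter, Finset.mem_univ, true_and, Finset.mem_singleton,
          hfib, horb, Set.mem_singleton_iff]
        constructor
        · rintro ⟨_, rfl⟩; rfl
        · rintro rfl; exact ⟨hy, rfl⟩
      rw [h1, h2]
    · have h2 : ((Finset.univ.filter (fun x : X => ∀ g : G, g • x = x)).filter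
          (fun x : X => Quotient.mk (MulAction.orbitRel G X) x
          = Quotient.mk (MulAction.orbitRel G X) y)) = ∅ := by
        ext x
        simp only [Finset.mem_filter, Finset.mem_univ, true_and, Finset.notMem_empty,
          iff_false, not_and, hfib]
        intro hxfix hxorb
        obtain ⟨g, hg⟩ := MulAction.mem_orbit_iff.mp hxorb
        apply hy
        have hA : g⁻¹ • x = x := hxfix g⁻¹
        have hB : g⁻¹ • x = y := by rw [← hg, inv_smul_smul]
        have hyx : y = x := by rw [← hB, hA]
        exact hyx ▸ hxfix
      rw [h2, Finset.sum_empty]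
      have hconst : ∀ x ∈ (Finset.univ.filter (fun x : X =>
          Quotient.mk (MulAction.orbitRel G X) x
          = Quotient.mk (MulAction.orbitRel G X) y)), f x = f y := by
        intro x hx
        rw [Finset.mem_filter] at hx
        obtain ⟨g, rfl⟩ := MulAction.mem_orbit_iff.mp ((hfib x).mp hx.2)
        exact hf g y
      rw [Finset.sum_congr rfl hconst, Finset.sum_const]
      have hcard : (Finset.univ.filter (fun x : X =>
          Quotient.mk (MulAction.orbitRel G X) x
          = Quotient.mk (MulAction.orbitRel G X) y)).card = Nat.card (orbit G y) := by
        rw [Nat.card_eq_fintype_card, ← Set.toFinset_card]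
        congr 1
        ext x; simp [hfib]
      have hdvd : p ∣ (Finset.univ.filter (fun x : X =>
          Quotient.mk (MulAction.orbitRel G X) x
          = Quotient.mk (MulAction.orbitRel G X) y)).card := by
        rw [hcard]
        have hd := card_orbit_dvd' (G := G) y
        rw [hn] at hd
        obtain ⟨k, hk, hkeq⟩ := (Nat.dvd_prime_pow hp).mp hd
        rcases Nat.eq_zero_or_pos k with rfl | hkpos
        · exfalso
          apply hy
          intro g
          simp only [pow_zero] at hkeq
          obtain ⟨x, hx⟩ := Nat.card_eq_one_iff_exists.mp hkeq
          have e1 := hx ⟨g • y, MulAction.mem_orbit _ _⟩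
          have e2 := hx ⟨y, MulAction.mem_orbit_self _⟩
          have := e1.trans e2.symm
          exact Subtype.ext_iff.mp this
        · rw [hkeq]
          exact dvd_pow_self p hkpos.ne'
      obtain ⟨m, hm⟩ := hdvd
      rw [hm, nsmul_eq_mul, Nat.cast_mul, ZMod.natCast_self, zero_mul, zero_mul]
open Pointwise

private lemma eulerChar_cast' {p : ℕ} {W : Type*} [Fintype W]
    (K : Set (Finset W)) [DecidablePred (· ∈ K)] :
    ((eulerChar K : ℤ) : ZMod p)
      = ∑ σ : Finset W, if σ ∈ K then (-1 : ZMod p) ^ (σ.card - 1) else 0 := by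
  have hfin : K.Finite := Set.toFinite K
  have hK : hfin.toFinset = Finset.univ.filter (fun σ : Finset W => σ ∈ K) := by
    ext σ; simp
  rw [show eulerChar K = ∑ᶠ σ ∈ K, (-1 : ℤ) ^ (σ.card - 1) from rfl,
    finsum_mem_eq_finite_toFinset_sum _ hfin, hK]
  push_cast
  rw [Finset.sum_filter]


/-- If a finite `p`-group `G` acts on a finite hypergraph `𝓗`
(acting on the vertices and carrying hyperedges to hyperedges), then
`χ(Θ(𝓗)) ≡ χ(Θ(𝓗/G)) (mod p)`, where the quotient hypergraph `𝓗/G` has vertex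
set `V/G` (the orbit space) and hyperedges the images of the hyperedges of `𝓗`
under the quotient map. -/
theorem eulerChar_theta_quotient {V G : Type*} [Finite V] [Nonempty V]
    [Group G] [Finite G] [MulAction G V] (p : ℕ) (hp : p.Prime)
    (hpG : IsPGroup p G) (H : Set (Set V))
    (hact : ∀ (g : G), ∀ h ∈ H, (fun v => g • v) '' h ∈ H) :
    eulerChar (thetaComplex H) ≡
      eulerChar (thetaComplex
        ((fun h => (fun v : V => Quotient.mk (MulAction.orbitRel G V) v) '' h) '' H))
      [ZMOD (p : ℤ)] := by
  classical
  haveI : Fact p.Prime := ⟨hp⟩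
  haveI := Fintype.ofFinite V
  obtain ⟨n, hnG⟩ := IsPGroup.iff_card.mp hpG
  set q : V → Quotient (MulAction.orbitRel G V) :=
    fun v => Quotient.mk (MulAction.orbitRel G V) v with hqdef
  haveI : Fintype (Quotient (MulAction.orbitRel G V)) := Fintype.ofFinite _
  set H' : Set (Set (Quotient (MulAction.orbitRel G V))) := (fun h => q '' h) '' H with hH'def
  rw [← ZMod.intCast_eq_intCast_iff, eulerChar_cast' (p := p) (thetaComplex H),
    eulerChar_cast' (p := p) (thetaComplex H')]
  -- basic facts about q
  have hq_smul : ∀ (g : G) (v : V), q (g • v) = q v :=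
    fun g v => Quotient.sound (MulAction.orbitRel_apply.mpr (MulAction.mem_orbit v g))
  have hq_exact : ∀ {u v : V}, q u = q v → u ∈ orbit G v :=
    fun h => MulAction.orbitRel_apply.mp (Quotient.exact h)
  -- the theta complex is G-invariant
  have hmem : ∀ (g : G) (σ : Finset V), σ ∈ thetaComplex H → g • σ ∈ thetaComplex H := by
    intro g σ hσ
    obtain ⟨hne, h, hh, hdis⟩ : σ.Nonempty ∧ ∃ h ∈ H, ∀ v ∈ σ, v ∉ h := hσ
    refine ⟨hne.smul_finset, (fun v => g • v) '' h, hact g h hh, ?_⟩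
    rintro w hw ⟨u, hu, rfl⟩
    rw [Finset.mem_smul_finset] at hw
    obtain ⟨v, hv, hveq⟩ := hw
    have hvu : v = u := smul_left_cancel_iff g |>.mp hveq
    exact hdis v hv (hvu ▸ hu)
  have hmem_iff : ∀ (g : G) (σ : Finset V), g • σ ∈ thetaComplex H ↔ σ ∈ thetaComplex H := by
    intro g σ
    refine ⟨fun h => ?_, hmem g σ⟩
    have := hmem g⁻¹ _ h
    rwa [inv_smul_smul] at this
  -- invariance of the summand
  have hf : ∀ (g : G) (σ : Finset V),
      (if g • σ ∈ thetaComplex H then (-1 : ZMod p) ^ ((g • σ).card - 1) else 0)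
        = (if σ ∈ thetaComplex H then (-1 : ZMod p) ^ (σ.card - 1) else 0) := by
    intro g σ
    by_cases hσ : σ ∈ thetaComplex H
    · rw [if_pos ((hmem_iff g σ).mpr hσ), if_pos hσ, Finset.card_smul_finset]
    · rw [if_neg (fun hc => hσ ((hmem_iff g σ).mp hc)), if_neg hσ]
  rw [sum_eq_sum_fixed hp hpG
    (fun σ : Finset V => if σ ∈ thetaComplex H then (-1 : ZMod p) ^ (σ.card - 1) else 0)
    (fun g σ => hf g σ)]
  rw [← Finset.sum_filter, ← Finset.sum_filter]
  -- the bijection between invariant simplices and simplices of the quotient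
  refine Finset.sum_nbij' (fun σ => σ.image q)
    (fun τ => Finset.univ.filter (fun v => q v ∈ τ)) ?_ ?_ ?_ ?_ ?_
  · -- maps into target
    intro σ hσ
    rw [Finset.mem_filter, Finset.mem_filter] at hσ
    obtain ⟨⟨-, hinv⟩, hσΘ⟩ := hσ
    obtain ⟨hne, h, hh, hdis⟩ : σ.Nonempty ∧ ∃ h ∈ H, ∀ v ∈ σ, v ∉ h := hσΘ
    rw [Finset.mem_filter]
    refine ⟨Finset.mem_univ _, hne.image q, q '' h, ⟨h, hh, rfl⟩, ?_⟩
    intro w hw hwh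
    obtain ⟨v, hv, rfl⟩ := Finset.mem_image.mp hw
    obtain ⟨u, hu, hqu⟩ := hwh
    obtain ⟨g, hg⟩ := MulAction.mem_orbit_iff.mp (hq_exact hqu)
    have huσ : u ∈ σ := by
      rw [← hg]
      have := hinv g
      exact this ▸ Finset.smul_mem_smul_finset hv
    exact hdis u huσ hu
  · -- maps back into source
    intro τ hτ
    rw [Finset.mem_filter] at hτ
    obtain ⟨-, hτΘ⟩ := hτ
    obtain ⟨hne, h', hh', hdis⟩ : τ.Nonempty ∧ ∃ h' ∈ H', ∀ w ∈ τ, w ∉ h' := hτΘ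
    obtain ⟨h, hh, rfl⟩ := hh'
    rw [Finset.mem_filter, Finset.mem_filter]
    refine ⟨⟨Finset.mem_univ _, ?_⟩, ?_⟩
    · -- invariance
      intro g
      ext u
      rw [Finset.mem_smul_finset]
      constructor
      · rintro ⟨v, hv, rfl⟩
        rw [Finset.mem_filter] at hv ⊢
        exact ⟨Finset.mem_univ _, by rw [hq_smul]; exact hv.2⟩
      · intro hu
        rw [Finset.mem_filter] at hu
        refine ⟨g⁻¹ • u, ?_, smul_inv_smul g u⟩
        rw [Finset.mem_filter]
        exact ⟨Finset.mem_univ _, by rw [hq_smul]; exact hu.2⟩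
    · -- membership in theta complex
      show (Finset.univ.filter (fun v => q v ∈ τ)).Nonempty ∧ _
      constructor
      · obtain ⟨w, hw⟩ := hne
        obtain ⟨v, rfl⟩ := Quotient.exists_rep w
        exact ⟨v, Finset.mem_filter.mpr ⟨Finset.mem_univ _, hw⟩⟩
      · refine ⟨h, hh, ?_⟩
        intro v hv hvh
        rw [Finset.mem_filter] at hv
        exact hdis (q v) hv.2 ⟨v, hvh, rfl⟩
  · -- left inverse
    intro σ hσ
    rw [Finset.mem_filter, Finset.mem_filter] at hσ
    obtain ⟨⟨-, hinv⟩, -⟩ := hσ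
    ext v
    rw [Finset.mem_filter]
    constructor
    · rintro ⟨-, hv⟩
      obtain ⟨u, hu, hqu⟩ := Finset.mem_image.mp hv
      obtain ⟨g, hg⟩ := MulAction.mem_orbit_iff.mp (hq_exact hqu.symm)
      rw [← hg]
      exact (hinv g) ▸ Finset.smul_mem_smul_finset hu
    · intro hv
      exact ⟨Finset.mem_univ _, Finset.mem_image_of_mem q hv⟩
  · -- right inverse
    intro τ hτ
    ext w
    rw [Finset.mem_image]
    constructor
    · rintro ⟨v, hv, rfl⟩
      exact (Finset.mem_filter.mp hv).2
    · intro hw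
      obtain ⟨v, rfl⟩ := Quotient.exists_rep w
      exact ⟨v, Finset.mem_filter.mpr ⟨Finset.mem_univ _, hw⟩, rfl⟩
  · -- values agree
    intro σ hσ
    rw [Finset.mem_filter, Finset.mem_filter] at hσ
    obtain ⟨⟨-, hinv⟩, hσΘ⟩ := hσ
    have hne : σ.Nonempty := hσΘ.1
    have hcard : σ.card = ∑ w ∈ σ.image q, (σ.filter (fun v => q v = w)).card :=
      Finset.card_eq_sum_card_fiberwise (fun v hv => Finset.mem_image_of_mem q hv)
    have hfib : ∀ w ∈ σ.image q,
        (-1 : ZMod p) ^ (σ.filter (fun v => q v = w)).card = -1 := by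
      intro w hw
      obtain ⟨u, hu, rfl⟩ := Finset.mem_image.mp hw
      have hfil : σ.filter (fun v => q v = q u) = (orbit G u).toFinset := by
        ext v
        simp only [Finset.mem_filter, Set.mem_toFinset]
        constructor
        · rintro ⟨-, hqv⟩
          exact hq_exact hqv
        · intro hv
          obtain ⟨g, hg⟩ := MulAction.mem_orbit_iff.mp hv
          refine ⟨?_, by rw [← hg, hq_smul]⟩
          rw [← hg]
          exact (hinv g) ▸ Finset.smul_mem_smul_finset hu
      rw [hfil, Set.toFinset_card]
      have hd := card_orbit_dvd' (G := G) u
      rw [hnG] at hd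
      obtain ⟨k, -, hkeq⟩ := (Nat.dvd_prime_pow hp).mp hd
      rw [← Nat.card_eq_fintype_card, hkeq]
      exact negOne_pow_prime_pow hp k
    have key : (-1 : ZMod p) ^ σ.card = (-1 : ZMod p) ^ (σ.image q).card := by
      rw [hcard, ← Finset.prod_pow_eq_pow_sum, Finset.prod_congr rfl hfib,
        Finset.prod_const]
    have ha : 1 ≤ σ.card := Finset.card_pos.mpr hne
    have hb : 1 ≤ (σ.image q).card := Finset.card_pos.mpr (hne.image q)
    have e1 : (-1 : ZMod p) ^ (σ.card - 1) * (-1)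
        = (-1 : ZMod p) ^ ((σ.image q).card - 1) * (-1) := by
      rw [← pow_succ, ← pow_succ, Nat.sub_add_cancel ha, Nat.sub_add_cancel hb, key]
    exact mul_right_cancel₀ (neg_ne_zero.mpr one_ne_zero) e1
end

section
/- For every n ≥ 1 and every 0 ≤ k ≤ n−1, the Euler characteristic χ(Θ(Cube(n,k))) is even. -/
open MulAction Pointwise

theorem IsPGroup.dvd_ncard_of_disjoint_fixedPoints {p : ℕ} [Fact p.Prime] {G α : Type*}
    [Group G] [MulAction G α] [Finite α] (hG : IsPGroup p G) {S : Set α}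
    (hS : ∀ g : G, ∀ x ∈ S, g • x ∈ S) (hfix : Disjoint S (fixedPoints G α)) :
    p ∣ S.ncard := by
  let T : SubMulAction G α := ⟨S, fun g _ hx => hS g _ hx⟩
  have : IsEmpty (fixedPoints G T) :=
    ⟨fun ⟨x, hx⟩ => hfix.ne_of_mem x.2 (fun g => congrArg Subtype.val (hx g)) rfl⟩
  have hcard := (hG.card_modEq_card_fixedPoints T).trans (by rw [Nat.card_of_isEmpty])
  rw [← Nat.card_coe_set_eq]
  exact Nat.modEq_zero_iff_dvd.1 hcard

theorem eulerChar_intCast_zmod_two {V : Type*} {K : Set (Finset V)} (hK : K.Finite) :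
    (eulerChar K : ZMod 2) = K.ncard := by
  rw [eulerChar, finsum_mem_eq_finite_toFinset_sum _ hK, Set.ncard_eq_toFinset_card K hK]
  push_cast
  simp [show (-1 : ZMod 2) = 1 from rfl]

theorem two_dvd_eulerChar_iff {V : Type*} {K : Set (Finset V)} (hK : K.Finite) :
    2 ∣ eulerChar K ↔ 2 ∣ K.ncard := by
  refine (ZMod.intCast_zmod_eq_zero_iff_dvd _ 2).symm.trans ?_
  rw [eulerChar_intCast_zmod_two hK, ZMod.natCast_eq_zero_iff]

section ThetaComplex

variable {G V : Type*} [Group G] [MulAction G V] {H : Set (Set V)}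

theorem smul_mem_thetaComplex [DecidableEq V] (hH : ∀ g : G, ∀ h ∈ H, g • h ∈ H) (g : G)
    {σ : Finset V} (hσ : σ ∈ thetaComplex H) : g • σ ∈ thetaComplex H := by
  obtain ⟨hne, h, hh, hdisj⟩ := hσ
  refine ⟨hne.smul_finset, g • h, hH g h hh, ?_⟩
  intro w hw
  obtain ⟨v, hv, rfl⟩ := Finset.mem_smul_finset.1 hw
  exact Set.smul_mem_smul_set_iff.not.2 (hdisj v hv)

theorem eq_univ_of_mem_fixedPoints [Fintype V] [DecidableEq V] [IsPretransitive G V]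
    {σ : Finset V} (hne : σ.Nonempty) (hσ : σ ∈ fixedPoints G (Finset V)) : σ = Finset.univ := by
  obtain ⟨v, hv⟩ := hne
  refine Finset.eq_univ_of_forall fun w => ?_
  obtain ⟨g, rfl⟩ := exists_smul_eq G v w
  rw [← hσ g]
  exact Finset.smul_mem_smul_finset hv

theorem univ_notMem_thetaComplex [Fintype V] (hH : ∀ h ∈ H, h.Nonempty) :
    Finset.univ ∉ thetaComplex H := by
  rintro ⟨-, h, hh, hdisj⟩
  obtain ⟨v, hv⟩ := hH h hh
  exact hdisj v (Finset.mem_univ v) hv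

theorem IsPGroup.dvd_ncard_thetaComplex {p : ℕ} [Fact p.Prime] [Finite V] [IsPretransitive G V]
    (hG : IsPGroup p G) (hH : ∀ g : G, ∀ h ∈ H, g • h ∈ H) (hne : ∀ h ∈ H, h.Nonempty) :
    p ∣ (thetaComplex H).ncard := by
  classical
  have := Fintype.ofFinite V
  refine hG.dvd_ncard_of_disjoint_fixedPoints (fun g σ => smul_mem_thetaComplex hH g)
    (Set.disjoint_left.2 fun σ hσ hfix => ?_)
  rw [eq_univ_of_mem_fixedPoints hσ.1 hfix] at hσ
  exact univ_notMem_thetaComplex hne hσ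

end ThetaComplex

theorem cubeEdges_nonempty {n k : ℕ} {e : Set (Fin n → Bool)} (he : e ∈ cubeEdges n k) :
    e.Nonempty := by
  obtain ⟨s, g, -, rfl⟩ := he
  exact ⟨g, fun _ _ => rfl⟩

/-- `Bool` is a Boolean ring with `+ = xor`, so `Multiplicative (Fin n → Bool)` acts on the cube
by translations. -/
theorem smul_mem_cubeEdges {n k : ℕ} (a : Multiplicative (Fin n → Bool))
    {e : Set (Fin n → Bool)} (he : e ∈ cubeEdges n k) : a • e ∈ cubeEdges n k := by
  obtain ⟨s, g, hs, rfl⟩ := he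
  refine ⟨s, a.toAdd + g, hs, Set.ext fun f => ?_⟩
  rw [Set.mem_smul_set_iff_inv_smul_mem]
  show (∀ i ∈ s, (-a.toAdd + f) i = g i) ↔ ∀ i ∈ s, f i = (a.toAdd + g) i
  simp only [Pi.add_apply, Pi.neg_apply, neg_add_eq_iff_eq_add]

theorem eulerChar_theta_cube_even_general (n k : ℕ) :
    2 ∣ eulerChar (thetaComplex (cubeEdges n k)) := by
  have : Fact (Nat.Prime 2) := ⟨Nat.prime_two⟩
  rw [two_dvd_eulerChar_iff (Set.toFinite _)]
  have hcube : IsPGroup 2 (Multiplicative (Fin n → Bool)) := IsPGroup.of_card (n := n) (by simp)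
  exact hcube.dvd_ncard_thetaComplex (fun a _ => smul_mem_cubeEdges a)
    (fun _ => cubeEdges_nonempty)

/-- For every `n ≥ 1` and `0 ≤ k ≤ n-1`, the Euler
characteristic `χ(Θ(Cube(n,k)))` is even. -/
theorem eulerChar_theta_cube_even (n k : ℕ) (hn : 1 ≤ n) (hk : k ≤ n - 1) :
    2 ∣ eulerChar (thetaComplex (cubeEdges n k)) :=
  eulerChar_theta_cube_even_general n k
end

section
/- Let p be an odd prime and n ≥ p. Then χ(Θ(Cube(n, n−2))) ≡ 1 (mod p). -/
open Finset

section SignedSums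

variable {α : Type*} [DecidableEq α]

theorem sum_Icc_neg_one_pow_card (C D : Finset α) :
    ∑ X ∈ Icc C D, (-1 : ℤ) ^ #X = if C = D then (-1) ^ #C else 0 := by
  by_cases h : C ⊆ D
  · have hinj : Set.InjOn (C ∪ ·) (D \ C).powerset := fun X hX Y hY hXY => by
      simp only [coe_powerset, Set.mem_preimage, Set.mem_powerset_iff, coe_subset,
        subset_sdiff] at hX hY
      simpa [union_sdiff_cancel_left hX.2.symm, union_sdiff_cancel_left hY.2.symm] using
        congrArg (· \ C) hXY
    have hcard : ∀ Y ∈ (D \ C).powerset, (-1 : ℤ) ^ #(C ∪ Y) = (-1) ^ #C * (-1) ^ #Y := by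
      intro Y hY
      rw [card_union_of_disjoint (subset_sdiff.mp (mem_powerset.mp hY)).2.symm, pow_add]
    have hempty : D \ C = ∅ ↔ C = D := by
      rw [sdiff_eq_empty_iff_subset]
      exact ⟨h.antisymm, fun e => e ▸ subset_rfl⟩
    rw [Icc_eq_image_powerset h, sum_image hinj, sum_congr rfl hcard, ← mul_sum,
      sum_powerset_neg_one_pow_card]
    simp only [hempty, mul_ite, mul_one, mul_zero]
  · rw [Icc_eq_empty (by simpa using h), sum_empty, if_neg (fun e => h e.subset)]

theorem ite_forall_not_disjoint_eq_sum {ι : Type*} [Fintype ι] [DecidableEq ι]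
    (F : ι → Finset α) (W : Finset α) :
    (if ∀ i, ¬ Disjoint W (F i) then 1 else 0 : ℤ) =
      ∑ S : Finset ι, (-1) ^ #S * if Disjoint W (S.biUnion F) then 1 else 0 := by
  calc _ = ∏ i, (1 - if Disjoint W (F i) then 1 else 0 : ℤ) := by
        rw [← Fintype.prod_boole]
        exact Fintype.prod_congr _ _ fun i => by by_cases hi : Disjoint W (F i) <;> simp [hi]
    _ = _ := by
        simp [prod_sub, disjoint_biUnion_right, prod_boole]

variable [Fintype α]

theorem sum_neg_one_pow_card_of_union_eq (W₀ U B : Finset α) :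
    ∑ W₁ with W₀ ∪ W₁ = U ∧ Disjoint W₁ B, (-1 : ℤ) ^ #W₁ =
      if W₀ = U ∩ B then (-1) ^ #(U \ B) else 0 := by
  by_cases hW : W₀ ⊆ U
  · have hfilter : ({W₁ | W₀ ∪ W₁ = U ∧ Disjoint W₁ B} : Finset (Finset α)) =
        Icc (U \ W₀) (U \ B) := by
      ext W₁
      rw [mem_filter, mem_Icc, subset_sdiff, sdiff_le_iff]
      constructor
      · rintro ⟨-, rfl, hd⟩
        exact ⟨le_rfl, subset_union_right, hd⟩
      · rintro ⟨h1, h2, hd⟩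
        exact ⟨mem_univ _, (union_subset hW h2).antisymm h1, hd⟩
    have hcompl : U \ W₀ = U \ B ↔ W₀ = U ∩ B := by
      constructor
      · intro h
        rw [← Finset.sdiff_sdiff_eq_self hW, h, sdiff_sdiff_right_self, inf_eq_inter]
      · rintro rfl
        rw [sdiff_inter_self_left]
    rw [hfilter, sum_Icc_neg_one_pow_card]
    by_cases h : W₀ = U ∩ B
    · rw [if_pos (hcompl.mpr h), if_pos h, hcompl.mpr h]
    · rw [if_neg (mt hcompl.mp h), if_neg h]
  · rw [if_neg (fun h : W₀ = U ∩ B => hW (h ▸ inter_subset_left))]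
    exact sum_eq_zero fun W₁ hW₁ => absurd ((mem_filter.1 hW₁).2.1 ▸ subset_union_left) hW

theorem sum_neg_one_pow_card_of_union_eq_pair (U A B : Finset α) :
    ∑ q : Finset α × Finset α with q.1 ∪ q.2 = U ∧ Disjoint q.1 A ∧ Disjoint q.2 B,
        (-1 : ℤ) ^ (#q.1 + #q.2) =
      if Disjoint U (A ∩ B) then (-1) ^ #U else 0 := by
  calc _ = ∑ W₀ with Disjoint W₀ A, (-1 : ℤ) ^ #W₀ *
        ∑ W₁ with W₀ ∪ W₁ = U ∧ Disjoint W₁ B, (-1 : ℤ) ^ #W₁ := by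
          rw [sum_filter, sum_filter, Fintype.sum_prod_type]
          refine sum_congr rfl fun W₀ _ => ?_
          by_cases hA : Disjoint W₀ A
          · simp only [hA, true_and, if_true, sum_filter, mul_sum, mul_ite, mul_zero, pow_add]
          · simp [hA]
    _ = ∑ W₀ with Disjoint W₀ A, if W₀ = U ∩ B then (-1 : ℤ) ^ #U else 0 := by
          refine sum_congr rfl fun W₀ _ => ?_
          rw [sum_neg_one_pow_card_of_union_eq, mul_ite, mul_zero]
          split_ifs with h
          · rw [h, ← pow_add, card_inter_add_card_sdiff]
          · rfl
    _ = _ := by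
          rw [sum_ite_eq']
          refine if_congr ?_ rfl rfl
          rw [mem_filter, disjoint_iff_inter_eq_empty, disjoint_iff_inter_eq_empty, inter_assoc,
            inter_comm B A]
          exact and_iff_right (mem_univ _)

theorem sum_disjoint_pair_mul_union (A B : Finset α) (g : Finset α → ℤ) :
    ∑ q : Finset α × Finset α with Disjoint q.1 A ∧ Disjoint q.2 B,
        g (q.1 ∪ q.2) * (-1) ^ (#q.1 + #q.2) =
      ∑ U with Disjoint U (A ∩ B), g U * (-1) ^ #U := by
  rw [← sum_fiberwise _ (fun q => q.1 ∪ q.2), sum_filter]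
  refine sum_congr rfl fun U _ => ?_
  rw [filter_filter, ← mul_zero (g U), ← mul_ite, ← sum_neg_one_pow_card_of_union_eq_pair,
    mul_sum]
  exact sum_congr (filter_congr fun _ _ => and_comm) fun q hq => by rw [(mem_filter.1 hq).2.1]

theorem sum_meets_pair_mul_union {ι : Type*} [Fintype ι] [DecidableEq ι]
    (F : ι → Finset α) (g : Finset α → ℤ) :
    ∑ q : Finset α × Finset α with (∀ i, ¬ Disjoint q.1 (F i)) ∧ ∀ i, ¬ Disjoint q.2 (F i),
        g (q.1 ∪ q.2) * (-1) ^ (#q.1 + #q.2) =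
      ∑ U, g U * (-1) ^ #U * ∑ r : Finset ι × Finset ι, (-1) ^ (#r.1 + #r.2) *
        if Disjoint U (r.1.biUnion F ∩ r.2.biUnion F) then 1 else 0 := by
  calc _ = ∑ q : Finset α × Finset α, ∑ r : Finset ι × Finset ι, (-1) ^ (#r.1 + #r.2) *
        if Disjoint q.1 (r.1.biUnion F) ∧ Disjoint q.2 (r.2.biUnion F) then
          g (q.1 ∪ q.2) * (-1) ^ (#q.1 + #q.2) else 0 := by
          rw [sum_filter]
          refine sum_congr rfl fun q _ => ?_
          rw [← boole_mul, ← mul_one (1 : ℤ), ← ite_zero_mul_ite_zero,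
            ite_forall_not_disjoint_eq_sum, ite_forall_not_disjoint_eq_sum, sum_mul_sum,
            ← Fintype.sum_prod_type', sum_mul]
          refine sum_congr rfl fun r _ => ?_
          split_ifs <;> simp_all [pow_add]
    _ = ∑ r : Finset ι × Finset ι, (-1) ^ (#r.1 + #r.2) *
        ∑ U with Disjoint U (r.1.biUnion F ∩ r.2.biUnion F), g U * (-1) ^ #U := by
          rw [sum_comm]
          simp_rw [← sum_disjoint_pair_mul_union, sum_filter, mul_sum]
    _ = _ := by
          simp_rw [sum_filter, mul_sum]
          rw [sum_comm]
          refine sum_congr rfl fun U _ => sum_congr rfl fun r _ => ?_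
          split_ifs <;> ring

end SignedSums

section PairsOfSubsets

variable {ι : Type*} [Fintype ι] [DecidableEq ι]

theorem sum_neg_one_pow_card_of_card_le_one :
    ∑ S : Finset ι with #S ≤ 1, (-1 : ℤ) ^ #S = 1 - Fintype.card ι := by
  have hS : ({S | #S ≤ 1} : Finset (Finset ι)) = insert ∅ (univ.image singleton) := by
    ext S
    simp only [mem_filter, mem_univ, true_and, mem_insert, mem_image, eq_comm (b := S),
      Nat.le_one_iff_eq_zero_or_eq_one, card_eq_zero, card_eq_one]
  rw [hS, sum_insert (by simp), sum_image fun _ _ _ _ h => singleton_injective h]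
  simp [sub_eq_add_neg]

omit [Fintype ι] [DecidableEq ι] in
theorem exists_forall_mem_eq_iff_card_le_one [Nonempty ι] {e : ι → ι} (he : Function.Injective e)
    (S : Finset ι) : (∃ j, ∀ i ∈ S, j = e i) ↔ #S ≤ 1 := by
  rw [card_le_one]
  constructor
  · rintro ⟨j, hj⟩ i hi i' hi'
    exact he ((hj i hi).symm.trans (hj i' hi'))
  · intro hS
    obtain rfl | ⟨i₀, hi₀⟩ := S.eq_empty_or_nonempty
    · exact ⟨Classical.arbitrary ι, by simp⟩
    · exact ⟨e i₀, fun i hi => congrArg e (hS i₀ hi₀ i hi)⟩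

theorem sum_neg_one_pow_card_pairs_matched [Nonempty ι] {e : ι → ι}
    (he : Function.Injective e) :
    ∑ r : Finset ι × Finset ι, (-1 : ℤ) ^ (#r.1 + #r.2) *
      (if ∀ i ∈ r.1, ∀ j ∈ r.2, j = e i then 1 else 0) = Fintype.card ι - 1 := by
  have hinner : ∀ S₀ : Finset ι, ∑ S₁ : Finset ι, (-1 : ℤ) ^ #S₁ *
      (if ∀ i ∈ S₀, ∀ j ∈ S₁, j = e i then 1 else 0) = if #S₀ ≤ 1 then 0 else 1 := fun S₀ => by
    set T : Finset ι := {j | ∀ i ∈ S₀, j = e i} with hT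
    have hsub : ∀ S₁ : Finset ι, (∀ i ∈ S₀, ∀ j ∈ S₁, j = e i) ↔ S₁ ∈ T.powerset := fun S₁ => by
      simp only [mem_powerset, subset_iff, hT, mem_filter, mem_univ, true_and]
      exact ⟨fun h j hj i hi => h i hi j hj, fun h i hi j hj => h hj i hi⟩
    have hTne : T = ∅ ↔ ¬ #S₀ ≤ 1 := by
      rw [← exists_forall_mem_eq_iff_card_le_one he, ← not_nonempty_iff_eq_empty]
      simp [hT, Finset.Nonempty]
    simp_rw [hsub, mul_boole, ← sum_filter, filter_mem_eq_inter, univ_inter,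
      sum_powerset_neg_one_pow_card, hTne, ite_not]
  calc _ = ∑ S₀ : Finset ι with ¬ #S₀ ≤ 1, (-1 : ℤ) ^ #S₀ := by
        rw [Fintype.sum_prod_type, sum_filter]
        simp_rw [pow_add, mul_assoc, ← mul_sum, hinner, mul_ite, mul_one, mul_zero, ite_not]
    _ = ∑ S₀ : Finset ι, (-1 : ℤ) ^ #S₀ - ∑ S₀ : Finset ι with #S₀ ≤ 1, (-1 : ℤ) ^ #S₀ := by
        rw [← sum_filter_add_sum_filter_not univ (fun S₀ : Finset ι => #S₀ ≤ 1)]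
        ring
    _ = _ := by
        rw [← powerset_univ, sum_powerset_neg_one_pow_card_of_nonempty univ_nonempty,
          powerset_univ, sum_neg_one_pow_card_of_card_le_one]
        ring

end PairsOfSubsets

theorem eulerChar_setOf_nonempty_and_not {V : Type*} [Fintype V] [Nonempty V]
    (P : Finset V → Prop) [DecidablePred P] (hP : ¬ P ∅) :
    eulerChar {σ | σ.Nonempty ∧ ¬ P σ} = 1 + ∑ σ with P σ, (-1 : ℤ) ^ #σ := by
  classical
  have hterm : ∀ σ : Finset V,
      {σ | σ.Nonempty ∧ ¬ P σ}.indicator (fun σ => (-1 : ℤ) ^ (#σ - 1)) σ =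
        (if σ = ∅ then 1 else 0) - (-1) ^ #σ + if P σ then (-1) ^ #σ else 0 := by
    intro σ
    obtain rfl | hσ := σ.eq_empty_or_nonempty
    · simp [hP]
    · have hshift : (-1 : ℤ) ^ (#σ - 1) = -(-1) ^ #σ := by
        rw [← Nat.sub_add_cancel (card_pos.mpr hσ), pow_succ]; simp
      by_cases hPσ : P σ <;> simp [Set.indicator, hσ, hσ.ne_empty, hPσ, hshift]
  rw [eulerChar, finsum_mem_def, finsum_eq_sum_of_fintype]
  simp_rw [hterm, sum_add_distrib, sum_sub_distrib, sum_ite_eq', mem_univ, if_true,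
    ← sum_filter]
  rw [← powerset_univ, sum_powerset_neg_one_pow_card_of_nonempty univ_nonempty, sub_zero]

theorem cond_subset_union {α : Type*} [DecidableEq α] (b : Bool) (s t : Finset α) :
    cond b t s ⊆ s ∪ t := by
  cases b
  · exact subset_union_left
  · exact subset_union_right

section Cube

variable {m : ℕ}

def facet (h : Fin m × Bool) : Finset (Fin m → Bool) := {f | f h.1 = h.2}

def MeetsCodimTwoFaces (W : Finset (Fin m → Bool)) : Prop :=
  ∀ i j, i ≠ j → ∀ a b, ∃ f ∈ W, f i = a ∧ f j = b

instance : DecidablePred (MeetsCodimTwoFaces (m := m)) := fun _ => by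
  unfold MeetsCodimTwoFaces; infer_instance

def codimTwoTransversalSum (m : ℕ) : ℤ :=
  ∑ W : Finset (Fin m → Bool) with MeetsCodimTwoFaces W, (-1) ^ #W

theorem not_disjoint_facet_iff {W : Finset (Fin m → Bool)} {h : Fin m × Bool} :
    ¬ Disjoint W (facet h) ↔ ∃ f ∈ W, f h.1 = h.2 := by
  simp [facet, not_disjoint_iff]

theorem not_meetsCodimTwoFaces_empty (hm : 2 ≤ m) :
    ¬ MeetsCodimTwoFaces (∅ : Finset (Fin m → Bool)) := fun h => by
  obtain ⟨f, hf, -⟩ := h ⟨0, by omega⟩ ⟨1, by omega⟩ (by simp) true true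
  exact notMem_empty f hf

theorem MeetsCodimTwoFaces.exists_mem_iff {U : Finset (Fin m → Bool)} (hm : 2 ≤ m)
    (hU : MeetsCodimTwoFaces U) {i j : Fin m} {a b : Bool} :
    (∃ f ∈ U, f i = a ∧ f j = b) ↔ (i = j → a = b) := by
  constructor
  · rintro ⟨f, -, rfl, rfl⟩ rfl
    rfl
  · intro hab
    by_cases hij : i = j
    · subst hij
      obtain ⟨k, hk⟩ := Fintype.exists_ne_of_one_lt_card (by rw [Fintype.card_fin]; omega) i
      obtain ⟨f, hf, hfi, -⟩ := hU i k hk.symm a a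
      exact ⟨f, hf, hfi, hab rfl ▸ hfi⟩
    · exact hU i j hij a b

theorem MeetsCodimTwoFaces.disjoint_biUnion_facet_inter_iff {U : Finset (Fin m → Bool)}
    (hm : 2 ≤ m) (hU : MeetsCodimTwoFaces U) (S₀ S₁ : Finset (Fin m × Bool)) :
    Disjoint U (S₀.biUnion facet ∩ S₁.biUnion facet) ↔
      ∀ h ∈ S₀, ∀ h' ∈ S₁, h' = (h.1, !h.2) := by
  simp_rw [biUnion_inter, disjoint_biUnion_right, inter_biUnion, disjoint_biUnion_right]
  refine forall₂_congr fun h _ => forall₂_congr fun h' _ => ?_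
  have : Disjoint U (facet h ∩ facet h') ↔ ¬ ∃ f ∈ U, f h.1 = h.2 ∧ f h'.1 = h'.2 := by
    simp [disjoint_left, facet]
  rw [this, hU.exists_mem_iff hm]
  obtain ⟨i, a⟩ := h
  obtain ⟨j, b⟩ := h'
  cases a <;> cases b <;> simp [eq_comm]

def cubeSuccEquiv (m : ℕ) : (Fin m → Bool) ⊕ (Fin m → Bool) ≃ (Fin (m + 1) → Bool) :=
  (Equiv.boolProdEquivSum _).symm.trans (Fin.consEquiv fun _ => Bool)

def glueSlices : Finset (Fin m → Bool) × Finset (Fin m → Bool) ≃ Finset (Fin (m + 1) → Bool) :=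
  sumEquiv.toEquiv.symm.trans (cubeSuccEquiv m).finsetCongr

theorem mem_glueSlices {q : Finset (Fin m → Bool) × Finset (Fin m → Bool)}
    {F : Fin (m + 1) → Bool} :
    F ∈ glueSlices q ↔ Fin.tail F ∈ cond (F 0) q.2 q.1 := by
  rw [glueSlices, Equiv.trans_apply, Equiv.finsetCongr_apply, mem_map_equiv]
  simp only [OrderIso.coe_symm_toEquiv, sumEquiv_symm_apply, cubeSuccEquiv,
    Equiv.boolProdEquivSum, Equiv.symm_mk, Fin.consEquiv, Equiv.symm_trans, Equiv.trans_apply,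
    Equiv.coe_fn_mk]
  cases F 0 <;> simp

theorem cons_mem_glueSlices {q : Finset (Fin m → Bool) × Finset (Fin m → Bool)} {b : Bool}
    {f : Fin m → Bool} : Fin.cons b f ∈ glueSlices q ↔ f ∈ cond b q.2 q.1 := by
  rw [mem_glueSlices, Fin.tail_cons, Fin.cons_zero]

theorem card_glueSlices (q : Finset (Fin m → Bool) × Finset (Fin m → Bool)) :
    #(glueSlices q) = #q.1 + #q.2 := by
  simp [glueSlices]

theorem meetsCodimTwoFaces_glueSlices_iff (q : Finset (Fin m → Bool) × Finset (Fin m → Bool)) :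
    MeetsCodimTwoFaces (glueSlices q) ↔ (∀ h, ¬ Disjoint q.1 (facet h)) ∧
      (∀ h, ¬ Disjoint q.2 (facet h)) ∧ MeetsCodimTwoFaces (q.1 ∪ q.2) := by
  simp only [not_disjoint_facet_iff, Prod.forall]
  constructor
  · intro hW
    have hslice : ∀ b i a, ∃ f ∈ cond b q.2 q.1, f i = a := fun b i a => by
      obtain ⟨F, hF, hF0, hFi⟩ := hW 0 i.succ (Fin.succ_ne_zero i).symm b a
      rw [mem_glueSlices, hF0] at hF
      exact ⟨Fin.tail F, hF, hFi⟩
    refine ⟨hslice false, hslice true, fun i j hij a b => ?_⟩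
    obtain ⟨F, hF, hFi, hFj⟩ := hW i.succ j.succ (Fin.succ_injective _ |>.ne hij) a b
    exact ⟨Fin.tail F, cond_subset_union _ q.1 q.2 (mem_glueSlices.mp hF), hFi, hFj⟩
  · rintro ⟨h₁, h₂, h₁₂⟩
    have hslice : ∀ b i a, ∃ F ∈ glueSlices q, F 0 = b ∧ F (Fin.succ i) = a := fun b i a => by
      obtain ⟨f, hf, hfi⟩ : ∃ f ∈ cond b q.2 q.1, f i = a := by cases b; exacts [h₁ i a, h₂ i a]
      exact ⟨Fin.cons b f, cons_mem_glueSlices.mpr hf, Fin.cons_zero _ _, hfi⟩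
    intro i j hij a b
    cases i using Fin.cases with
    | zero =>
      cases j using Fin.cases with
      | zero => exact absurd rfl hij
      | succ j => exact hslice a j b
    | succ i =>
      cases j using Fin.cases with
      | zero =>
        obtain ⟨F, hF, hF0, hFi⟩ := hslice b i a
        exact ⟨F, hF, hFi, hF0⟩
      | succ j =>
        obtain ⟨f, hf, hfi, hfj⟩ := h₁₂ i j (fun h => hij (congrArg _ h)) a b
        obtain ⟨c, hc⟩ : ∃ c, f ∈ cond c q.2 q.1 := by
          rcases mem_union.mp hf with hf | hf
          exacts [⟨false, hf⟩, ⟨true, hf⟩]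
        exact ⟨Fin.cons c f, cons_mem_glueSlices.mpr hc, hfi, hfj⟩

theorem codimTwoTransversalSum_succ (hm : 2 ≤ m) :
    codimTwoTransversalSum (m + 1) = (2 * m - 1) * codimTwoTransversalSum m := by
  have : Nonempty (Fin m) := ⟨⟨0, by omega⟩⟩
  calc codimTwoTransversalSum (m + 1)
      = ∑ q with MeetsCodimTwoFaces (glueSlices q), (-1 : ℤ) ^ (#q.1 + #q.2) := by
        rw [codimTwoTransversalSum, sum_filter, sum_filter, ← glueSlices.sum_comp]
        simp_rw [card_glueSlices]
        rfl
    _ = ∑ q : Finset (Fin m → Bool) × Finset (Fin m → Bool) with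
          (∀ h, ¬ Disjoint q.1 (facet h)) ∧ ∀ h, ¬ Disjoint q.2 (facet h),
          (if MeetsCodimTwoFaces (q.1 ∪ q.2) then 1 else 0) * (-1) ^ (#q.1 + #q.2) := by
        rw [sum_filter, sum_filter]
        refine sum_congr rfl fun q _ => ?_
        rw [boole_mul, ← ite_and]
        exact if_congr ((meetsCodimTwoFaces_glueSlices_iff q).trans and_assoc.symm) rfl rfl
    _ = ∑ U, (if MeetsCodimTwoFaces U then 1 else 0) * (-1) ^ #U * (2 * m - 1 : ℤ) := by
        rw [sum_meets_pair_mul_union facet fun U => if MeetsCodimTwoFaces U then 1 else 0]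
        refine sum_congr rfl fun U _ => ?_
        split_ifs with hU
        · simp_rw [hU.disjoint_biUnion_facet_inter_iff hm]
          rw [sum_neg_one_pow_card_pairs_matched (e := fun h => (h.1, !h.2))
            (fun h h' hh => by simpa [Prod.ext_iff] using hh)]
          simp [Fintype.card_prod, mul_comm]
        · simp
    _ = (2 * m - 1) * codimTwoTransversalSum m := by
        rw [codimTwoTransversalSum, sum_filter, mul_sum]
        exact sum_congr rfl fun U _ => by split_ifs <;> ring

theorem meetsCodimTwoFaces_two_iff {W : Finset (Fin 2 → Bool)} :
    MeetsCodimTwoFaces W ↔ W = univ := by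
  constructor
  · intro hW
    refine eq_univ_of_forall fun f => ?_
    obtain ⟨g, hg, hg0, hg1⟩ := hW 0 1 (by decide) (f 0) (f 1)
    rwa [show f = g from funext (Fin.forall_fin_two.mpr ⟨hg0.symm, hg1.symm⟩)]
  · rintro rfl i j hij a b
    exact ⟨fun k => if k = i then a else b, mem_univ _, by simp, by simp [Ne.symm hij]⟩

theorem codimTwoTransversalSum_two : codimTwoTransversalSum 2 = 1 := by
  simp [codimTwoTransversalSum, meetsCodimTwoFaces_two_iff, filter_eq']

theorem codimTwoTransversalSum_eq_prod (hm : 2 ≤ m) :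
    codimTwoTransversalSum m = ∏ k ∈ Ico 2 m, (2 * k - 1 : ℤ) := by
  induction m, hm using Nat.le_induction with
  | base => simp [codimTwoTransversalSum_two]
  | succ k hk ih => rw [codimTwoTransversalSum_succ hk, ih, prod_Ico_succ_top hk, mul_comm]

end Cube

theorem mem_cubeEdges_sub_two {n : ℕ} (hn : 2 ≤ n) {e : Set (Fin n → Bool)} :
    e ∈ cubeEdges n (n - 2) ↔ ∃ i j, i ≠ j ∧ ∃ a b, e = {f | f i = a ∧ f j = b} := by
  simp only [cubeEdges, Set.mem_ofPred_eq, Nat.sub_sub_self hn]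
  constructor
  · rintro ⟨s, g, hs, rfl⟩
    obtain ⟨i, j, hij, rfl⟩ := card_eq_two.mp hs
    exact ⟨i, j, hij, g i, g j, by simp⟩
  · rintro ⟨i, j, hij, a, b, rfl⟩
    refine ⟨{i, j}, fun k => if k = i then a else b, card_pair hij, ?_⟩
    ext f
    simp [Ne.symm hij]

theorem thetaComplex_cubeEdges_sub_two {n : ℕ} (hn : 2 ≤ n) :
    thetaComplex (cubeEdges n (n - 2)) = {σ | σ.Nonempty ∧ ¬ MeetsCodimTwoFaces σ} := by
  ext σ
  simp only [thetaComplex, Set.mem_ofPred_eq, mem_cubeEdges_sub_two hn, MeetsCodimTwoFaces]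
  refine and_congr_right fun _ => ?_
  push Not
  constructor
  · rintro ⟨-, ⟨i, j, hij, a, b, rfl⟩, hσ⟩
    exact ⟨i, j, hij, a, b, fun f hf hfi hfj => hσ f hf ⟨hfi, hfj⟩⟩
  · rintro ⟨i, j, hij, a, b, hσ⟩
    exact ⟨_, ⟨i, j, hij, a, b, rfl⟩, fun f hf hfe => hσ f hf hfe.1 hfe.2⟩

theorem eulerChar_thetaComplex_cubeEdges_sub_two {n : ℕ} (hn : 2 ≤ n) :
    eulerChar (thetaComplex (cubeEdges n (n - 2))) = 1 + ∏ k ∈ Ico 2 n, (2 * k - 1 : ℤ) := by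
  rw [thetaComplex_cubeEdges_sub_two hn,
    eulerChar_setOf_nonempty_and_not _ (not_meetsCodimTwoFaces_empty hn),
    ← codimTwoTransversalSum_eq_prod hn, codimTwoTransversalSum]

theorem eulerChar_theta_cube_codim_two_general (p n : ℕ) (hodd : Odd p)
    (hn : p ≤ n) :
    eulerChar (thetaComplex (cubeEdges n (n - 2))) ≡ 1 [ZMOD (p : ℤ)] := by
  obtain ⟨k, rfl⟩ := hodd
  rcases Nat.eq_zero_or_pos k with rfl | hk
  · simpa using Int.modEq_one
  have hdvd : ((2 * k + 1 : ℕ) : ℤ) ∣ ∏ j ∈ Ico 2 n, (2 * j - 1 : ℤ) := by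
    have hp : ((2 * k + 1 : ℕ) : ℤ) = 2 * ((k + 1 : ℕ) : ℤ) - 1 := by push_cast; ring
    rw [hp]
    exact dvd_prod_of_mem (fun j : ℕ => (2 * j - 1 : ℤ)) (mem_Ico.mpr ⟨by omega, by omega⟩)
  rw [eulerChar_thetaComplex_cubeEdges_sub_two (by omega)]
  simpa using (Int.modEq_zero_iff_dvd.mpr hdvd).add_left 1

/-- For every odd prime `p` and every `n ≥ p`,
`χ(Θ(Cube(n, n-2))) ≡ 1 (mod p)`. -/
theorem eulerChar_theta_cube_codim_two (p n : ℕ) (hp : p.Prime) (hodd : Odd p)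
    (hn : p ≤ n) :
    eulerChar (thetaComplex (cubeEdges n (n - 2))) ≡ 1 [ZMOD (p : ℤ)] :=
  eulerChar_theta_cube_codim_two_general p n hodd hn
end

section
/- Let p be an odd prime and n ≥ p, and let ℤ_p act on Cube(n, n−2) by identifying the vertices of the n-cube with subsets of {x₁,…,x_{n−p}, y₁,…,y_p} and cyclically permuting y₁,…,y_p. Then the theta complex Θ(Cube(n, n−2)/ℤ_p) of the quotient hypergraph is contractible. -/
/-- The vertices of the `n`-cube, identified with subsets of
`{x₁, …, x_{n-p}, y₁, …, y_p}`: functions from `Fin (n-p) ⊕ ZMod p` to `Bool`.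
More generally, `cubeEdgesOn ι m` is the set of faces of the cube on the
coordinate set `ι` obtained by fixing `m` coordinates; for `ι` of cardinality
`n` and `m = 2` these are the `(n-2)`-dimensional faces. -/
def cubeEdgesOn (ι : Type*) (m : ℕ) : Set (Set (ι → Bool)) :=
  {e | ∃ (s : Finset ι) (g : ι → Bool), s.card = m ∧ e = {f | ∀ i ∈ s, f i = g i}}

/-- The generator `g ∈ ℤ_p` acts on the vertices of the cube by cyclically
permuting the `y`-coordinates (indexed by `ZMod p`) and fixing the
`x`-coordinates (indexed by `Fin m`). -/
def rotate (p m : ℕ) (g : ZMod p) (f : (Fin m ⊕ ZMod p) → Bool) :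
    (Fin m ⊕ ZMod p) → Bool :=
  Sum.elim (fun j => f (Sum.inl j)) (fun j => f (Sum.inr (j - g)))

/-- Two cube vertices are related iff they are in the same `ℤ_p`-orbit. -/
def rotRel (p m : ℕ) (f f' : (Fin m ⊕ ZMod p) → Bool) : Prop :=
  ∃ g : ZMod p, f' = rotate p m g f

/-!
Squash every vertex of the cube to the vertex with the same `x`-part whose `y`-coordinates all
equal their majority value (`p` is odd, so there are no ties); this is rotation invariant, so it
descends to a vertex map `R` of the quotient. If the squashed vertex lies in a face fixing two
coordinates, some rotation of the original vertex lies in it as well, because the set of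
majority positions has more than `p / 2` elements and so meets each of its translates. Hence `R`
never moves a vertex into a hyperedge it avoided, `σ ∪ R σ` is a simplex with `σ`, and the
straight-line homotopy joins the identity to the map induced by `R` on the realization. All
squashed vertices avoid the face `y₀ = 1, y₁ = 0`, so the cone from any of them contracts the
image.
-/

open Finset

theorem ContinuousMap.homotopic_of_segment_subset {X E : Type*} [TopologicalSpace X]
    [AddCommGroup E] [Module ℝ E] [TopologicalSpace E] [ContinuousAdd E] [ContinuousSMul ℝ E]
    {S : Set E} (f g : C(X, S)) (h : ∀ x, segment ℝ (f x : E) (g x) ⊆ S) : f.Homotopic g :=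
  ⟨{ toFun := fun q => ⟨AffineMap.lineMap (f q.2 : E) (g q.2) (q.1 : ℝ),
        h q.2 (lineMap_mem_segment ℝ _ _ q.1.2)⟩
     continuous_toFun := by simp only [AffineMap.lineMap_apply_module]; fun_prop
     map_zero_left := fun x => by simp
     map_one_left := fun x => by simp }⟩

section GeomReal

variable {V : Type*} [Fintype V] {K : Set (Finset V)}

theorem mem_geomReal_iff {f : V → ℝ} :
    f ∈ geomReal K ↔ f ∈ stdSimplex ℝ V ∧ ∃ σ ∈ K, ∀ v, f v ≠ 0 → v ∈ σ := by
  have sum_eq {σ : Finset V} (hsupp : ∀ v, f v ≠ 0 → v ∈ σ) : ∑ v ∈ σ, f v = ∑ v, f v :=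
    sum_subset (subset_univ σ) fun v _ hv => by_contra fun h => hv (hsupp v h)
  refine ⟨fun ⟨h0, σ, hσ, hsupp, hsum⟩ => ⟨⟨h0, ?_⟩, σ, hσ, hsupp⟩,
    fun ⟨⟨h0, hsum⟩, σ, hσ, hsupp⟩ => ⟨h0, σ, hσ, hsupp, ?_⟩⟩
  · rwa [← sum_eq hsupp]
  · rwa [sum_eq hsupp]

theorem segment_subset_geomReal {a b : V → ℝ} (ha : a ∈ stdSimplex ℝ V) (hb : b ∈ stdSimplex ℝ V)
    {σ : Finset V} (hσ : σ ∈ K) (hsupp : ∀ v, a v ≠ 0 ∨ b v ≠ 0 → v ∈ σ) :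
    segment ℝ a b ⊆ geomReal K := by
  rintro _ hx
  refine mem_geomReal_iff.2 ⟨convex_stdSimplex ℝ V |>.segment_subset ha hb hx, σ, hσ, ?_⟩
  obtain ⟨s, t, -, -, -, rfl⟩ := hx
  intro v hv
  refine hsupp v (not_and_or.1 fun h => hv ?_)
  simp [h.1, h.2]

theorem FunOnFinite.map_mem_stdSimplex {W : Type*} [Fintype W] {f : V → ℝ}
    (hf : f ∈ stdSimplex ℝ V) (R : V → W) : FunOnFinite.map R f ∈ stdSimplex ℝ W :=
  stdSimplex.image_linearMap R ⟨f, hf, rfl⟩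

end GeomReal

theorem FunOnFinite.exists_ne_zero_of_map_ne_zero {X Y M : Type*} [Finite X] [Finite Y]
    [AddCommMonoid M] {f : X → Y} {s : X → M} {y : Y} (h : FunOnFinite.map f s y ≠ 0) :
    ∃ x, f x = y ∧ s x ≠ 0 := by
  classical
  have := Fintype.ofFinite X
  rw [FunOnFinite.map_apply_apply] at h
  obtain ⟨x, hx, hx0⟩ := exists_ne_zero_of_sum_ne_zero h
  exact ⟨x, (mem_filter.1 hx).2, hx0⟩

theorem contractibleSpace_geomReal_of_vertexMap {V : Type*} [Fintype V] [DecidableEq V]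
    {K : Set (Finset V)} (R : V → V) (v₀ : V)
    (h_union : ∀ σ ∈ K, σ ∪ σ.image R ∈ K) (h_cone : ∀ σ ∈ K, insert v₀ (σ.image R) ∈ K)
    (h₀ : {v₀} ∈ K) : ContractibleSpace (geomReal K) := by
  have supp_map {f : V → ℝ} {σ : Finset V} (hf : ∀ v, f v ≠ 0 → v ∈ σ) (w : V)
      (hw : FunOnFinite.map R f w ≠ 0) : w ∈ σ.image R := by
    obtain ⟨v, rfl, hv⟩ := FunOnFinite.exists_ne_zero_of_map_ne_zero hw
    exact mem_image_of_mem R (hf v hv)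
  have map_mem (x : geomReal K) : FunOnFinite.map R (x : V → ℝ) ∈ geomReal K := by
    obtain ⟨hx, σ, hσ, hsupp⟩ := mem_geomReal_iff.1 x.2
    exact mem_geomReal_iff.2 ⟨FunOnFinite.map_mem_stdSimplex hx R, _, h_cone σ hσ,
      fun w hw => mem_insert_of_mem (supp_map hsupp w hw)⟩
  let push : C(geomReal K, geomReal K) :=
    ⟨fun x => ⟨_, map_mem x⟩,
      ((FunOnFinite.continuous_map ℝ R).comp continuous_subtype_val).subtype_mk map_mem⟩
  let vertex : geomReal K := ⟨Pi.single v₀ 1, mem_geomReal_iff.2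
    ⟨single_mem_stdSimplex ℝ v₀, _, h₀, fun v hv =>
      mem_singleton.2 (by_contra fun h => hv (Pi.single_eq_of_ne h _))⟩⟩
  rw [contractible_iff_id_nullhomotopic]
  refine ⟨vertex, .trans (ContinuousMap.homotopic_of_segment_subset _ push fun x => ?_)
    (ContinuousMap.homotopic_of_segment_subset push (.const _ vertex) fun x => ?_)⟩
  all_goals
    obtain ⟨hx, σ, hσ, hsupp⟩ := mem_geomReal_iff.1 x.2
    have hpush := FunOnFinite.map_mem_stdSimplex hx R
  · refine segment_subset_geomReal hx hpush (h_union σ hσ) fun v hv => ?_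
    rcases hv with hv | hv
    · exact mem_union_left _ (hsupp v hv)
    · exact mem_union_right _ (supp_map hsupp v hv)
  · refine segment_subset_geomReal hpush (single_mem_stdSimplex ℝ v₀) (h_cone σ hσ)
      fun v hv => ?_
    rcases hv with hv | hv
    · exact mem_insert_of_mem (supp_map hsupp v hv)
    · exact mem_insert.2 (.inl (by_contra fun h => hv (Pi.single_eq_of_ne h _)))

theorem contractibleSpace_geomReal_thetaComplex {V : Type*} [Finite V] [Nonempty V]
    (H : Set (Set V)) (R : V → V) (hR : ∀ h ∈ H, ∀ v ∉ h, R v ∉ h) {h₀ : Set V} (h₀H : h₀ ∈ H)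
    (hR₀ : ∀ v, R v ∉ h₀) : ContractibleSpace (geomReal (thetaComplex H)) := by
  classical
  have := Fintype.ofFinite V
  obtain ⟨v⟩ := ‹Nonempty V›
  refine contractibleSpace_geomReal_of_vertexMap R (R v) ?_ ?_ ?_
  · rintro σ ⟨hσ, h, hH, hσh⟩
    refine ⟨hσ.mono subset_union_left, h, hH, fun w hw => ?_⟩
    rcases mem_union.1 hw with hw | hw
    · exact hσh w hw
    · obtain ⟨u, hu, rfl⟩ := mem_image.1 hw
      exact hR h hH u (hσh u hu)
  · exact fun σ _ => ⟨insert_nonempty _ _, h₀, h₀H, by simp [hR₀]⟩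
  · exact ⟨singleton_nonempty _, h₀, h₀H, by simp [hR₀]⟩

section Majority

variable {ι : Type*} [Fintype ι]

def majority (c : ι → Bool) : Bool :=
  decide (Fintype.card ι < 2 * (univ.filter fun i => c i = true).card)

theorem majority_comp_equiv (c : ι → Bool) (e : ι ≃ ι) : majority (c ∘ e) = majority c := by
  have : (univ.filter fun i => (c ∘ e) i = true).card = (univ.filter fun i => c i = true).card :=
    card_equiv e (by simp)
  rw [majority, majority, this]

theorem card_lt_two_mul_card_eq_majority (hodd : Odd (Fintype.card ι)) (c : ι → Bool) :
    Fintype.card ι < 2 * (univ.filter fun i => c i = majority c).card := by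
  have hsplit := card_filter_add_card_filter_not (s := univ) (fun i => c i = true)
  rw [card_univ] at hsplit
  by_cases h : Fintype.card ι < 2 * (univ.filter fun i => c i = true).card
  · simp [majority, h]
  · have hne : Fintype.card ι ≠ 2 * (univ.filter fun i => c i = true).card := by
      rintro heq
      exact Nat.not_even_iff_odd.2 hodd ⟨_, heq.trans (two_mul _)⟩
    simp only [Bool.not_eq_true] at hsplit
    simp only [majority, h, decide_false]
    omega

theorem exists_eq_majority_of_odd_card (hodd : Odd (Fintype.card ι)) (c : ι → Bool)
    (e : ι ≃ ι) : ∃ i, c i = majority c ∧ c (e i) = majority c := by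
  classical
  have hlt := card_lt_two_mul_card_eq_majority hodd c
  have hcard : (univ.filter fun i => c (e i) = majority c).card =
      (univ.filter fun i => c i = majority c).card :=
    card_equiv e (by simp)
  obtain ⟨i, hi⟩ := inter_nonempty_of_card_lt_card_add_card
    (t := univ.filter fun i => c i = majority c) (u := univ.filter fun i => c (e i) = majority c)
    (subset_univ _) (subset_univ _) (by rw [card_univ, hcard]; omega)
  simp only [mem_inter, mem_filter, mem_univ, true_and] at hi
  exact ⟨i, hi⟩

end Majority

namespace CubeQuotient

variable {p m : ℕ}

@[simp]
theorem rotate_inl (g : ZMod p) (f : Fin m ⊕ ZMod p → Bool) (a : Fin m) :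
    rotate p m g f (.inl a) = f (.inl a) := rfl

@[simp]
theorem rotate_inr (g : ZMod p) (f : Fin m ⊕ ZMod p → Bool) (c : ZMod p) :
    rotate p m g f (.inr c) = f (.inr (c - g)) := rfl

theorem rotate_rotate (a b : ZMod p) (f : Fin m ⊕ ZMod p → Bool) :
    rotate p m a (rotate p m b f) = rotate p m (a + b) f := by
  funext i
  cases i <;> simp [sub_sub]

@[simp]
theorem rotate_zero (f : Fin m ⊕ ZMod p → Bool) : rotate p m 0 f = f := by
  funext i
  cases i <;> simp

theorem equivalence_rotRel : Equivalence (rotRel p m) where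
  refl f := ⟨0, (rotate_zero f).symm⟩
  symm := by
    rintro f _ ⟨g, rfl⟩
    exact ⟨-g, by rw [rotate_rotate, neg_add_cancel, rotate_zero]⟩
  trans := by
    rintro f _ _ ⟨g, rfl⟩ ⟨g', rfl⟩
    exact ⟨g' + g, rotate_rotate g' g f⟩

theorem mk_mem_image_mk_iff {e : Set (Fin m ⊕ ZMod p → Bool)} {f : Fin m ⊕ ZMod p → Bool} :
    Quot.mk (rotRel p m) f ∈ Quot.mk (rotRel p m) '' e ↔ ∃ g, rotate p m g f ∈ e := by
  refine ⟨?_, fun ⟨g, hg⟩ => ⟨_, hg, (Quot.sound ⟨g, rfl⟩).symm⟩⟩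
  rintro ⟨f', hf', hmk⟩
  obtain ⟨g, rfl⟩ := equivalence_rotRel.eqvGen_iff.1 (Quot.eqvGen_exact hmk)
  exact ⟨-g, by rwa [rotate_rotate, neg_add_cancel, rotate_zero]⟩

variable [NeZero p]

def squash (f : Fin m ⊕ ZMod p → Bool) : Fin m ⊕ ZMod p → Bool :=
  Sum.elim (f ∘ .inl) fun _ => majority (f ∘ .inr)

@[simp]
theorem squash_inr (f : Fin m ⊕ ZMod p → Bool) (c : ZMod p) :
    squash f (.inr c) = majority (f ∘ .inr) := rfl

theorem squash_rotate (g : ZMod p) (f : Fin m ⊕ ZMod p → Bool) :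
    squash (rotate p m g f) = squash f := by
  funext i
  cases i with
  | inl a => rfl
  | inr c => exact majority_comp_equiv (f ∘ .inr) (Equiv.subRight g)

@[simp]
theorem rotate_squash (g : ZMod p) (f : Fin m ⊕ ZMod p → Bool) :
    rotate p m g (squash f) = squash f := by
  funext i
  cases i <;> rfl

theorem exists_rotate_eq_squash_inr (hodd : Odd p) (f : Fin m ⊕ ZMod p → Bool) (c d : ZMod p) :
    ∃ g, rotate p m g f (.inr c) = squash f (.inr c) ∧
      rotate p m g f (.inr d) = squash f (.inr d) := by
  obtain ⟨t, ht, ht'⟩ := exists_eq_majority_of_odd_card (by rwa [ZMod.card]) (f ∘ .inr)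
    (Equiv.addRight (d - c))
  refine ⟨c - t, ?_, ?_⟩
  · simpa using ht
  · simpa [show d - (c - t) = t + (d - c) by ring] using ht'

theorem exists_rotate_eq_squash (hodd : Odd p) (f : Fin m ⊕ ZMod p → Bool)
    (i j : Fin m ⊕ ZMod p) :
    ∃ g, rotate p m g f i = squash f i ∧ rotate p m g f j = squash f j := by
  rcases i with a | c <;> rcases j with b | d
  · exact ⟨0, rfl, rfl⟩
  · obtain ⟨g, -, hg⟩ := exists_rotate_eq_squash_inr hodd f d d
    exact ⟨g, rfl, hg⟩
  · obtain ⟨g, hg, -⟩ := exists_rotate_eq_squash_inr hodd f c c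
    exact ⟨g, hg, rfl⟩
  · exact exists_rotate_eq_squash_inr hodd f c d

theorem exists_rotate_mem_of_squash_mem (hodd : Odd p) {e : Set (Fin m ⊕ ZMod p → Bool)}
    (he : e ∈ cubeEdgesOn (Fin m ⊕ ZMod p) 2) {f : Fin m ⊕ ZMod p → Bool}
    (hf : squash f ∈ e) : ∃ g, rotate p m g f ∈ e := by
  obtain ⟨s, v, hs, rfl⟩ := he
  obtain ⟨i, j, -, rfl⟩ := card_eq_two.1 hs
  obtain ⟨g, hi, hj⟩ := exists_rotate_eq_squash hodd f i j
  refine ⟨g, ?_⟩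
  simp only [Set.mem_ofPred_eq, mem_insert, mem_singleton, forall_eq_or_imp,
    forall_eq] at hf ⊢
  rwa [hi, hj]

theorem exists_cubeEdge_forall_squash_notMem (hp : 1 < p) :
    ∃ e ∈ cubeEdgesOn (Fin m ⊕ ZMod p) 2, ∀ f, squash f ∉ e := by
  have : Fact (1 < p) := ⟨hp⟩
  have h01 : (Sum.inr 0 : Fin m ⊕ ZMod p) ≠ .inr 1 := by simp
  refine ⟨_, ⟨{.inr 0, .inr 1}, fun i => decide (i = .inr 0), card_pair h01, rfl⟩,
    fun f hf => ?_⟩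
  have h0 := hf (.inr 0) (by simp)
  have h1 := hf (.inr 1) (by simp)
  simp only [squash_inr, decide_true, h01.symm, decide_false] at h0 h1
  cases h0.symm.trans h1

def squashQuot : Quot (rotRel p m) → Quot (rotRel p m) :=
  Quot.lift (fun f => Quot.mk _ (squash f)) (by rintro f _ ⟨g, rfl⟩; rw [squash_rotate])

theorem squashQuot_notMem_image_mk (hodd : Odd p) {e : Set (Fin m ⊕ ZMod p → Bool)}
    (he : e ∈ cubeEdgesOn (Fin m ⊕ ZMod p) 2) {v : Quot (rotRel p m)}
    (hv : v ∉ Quot.mk _ '' e) : squashQuot v ∉ Quot.mk _ '' e := by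
  induction v using Quot.ind with | mk f => ?_
  rintro hsq
  obtain ⟨g, hg⟩ := mk_mem_image_mk_iff.1 hsq
  rw [rotate_squash] at hg
  exact hv (mk_mem_image_mk_iff.2 (exists_rotate_mem_of_squash_mem hodd he hg))

theorem squashQuot_notMem_image_mk_of_forall {e : Set (Fin m ⊕ ZMod p → Bool)}
    (he : ∀ f, squash f ∉ e) (v : Quot (rotRel p m)) : squashQuot v ∉ Quot.mk _ '' e := by
  induction v using Quot.ind with | mk f => ?_
  rintro hsq
  obtain ⟨g, hg⟩ := mk_mem_image_mk_iff.1 hsq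
  exact he f (by rwa [rotate_squash] at hg)

end CubeQuotient

open CubeQuotient in
theorem theta_cube_quotient_contractible_general (p n : ℕ) (hp : p.Prime) (hodd : Odd p) :
    ContractibleSpace (↥(geomReal (thetaComplex
      ((fun h => Quot.mk (rotRel p (n - p)) '' h) ''
        (cubeEdgesOn (Fin (n - p) ⊕ ZMod p) 2))))) := by
  have : NeZero p := ⟨hp.ne_zero⟩
  obtain ⟨e₀, he₀, hsq⟩ := exists_cubeEdge_forall_squash_notMem (m := n - p) hp.one_lt
  refine contractibleSpace_geomReal_thetaComplex _ squashQuot ?_ (Set.mem_image_of_mem _ he₀)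
    (squashQuot_notMem_image_mk_of_forall hsq)
  rintro _ ⟨e, he, rfl⟩ v hv
  exact squashQuot_notMem_image_mk hodd he hv

/-- Let `p` be an odd prime and `n ≥ p`, and let `ℤ_p` act on
`Cube(n, n-2)` by cyclically permuting the coordinates `y₁, …, y_p` (fixing
`x₁, …, x_{n-p}`).  Then the theta complex of the quotient hypergraph
`Cube(n, n-2)/ℤ_p` — whose vertices are the `ℤ_p`-orbits of cube vertices and
whose hyperedges are the images of the `(n-2)`-dimensional faces — is
contractible. -/
theorem theta_cube_quotient_contractible (p n : ℕ) (hp : p.Prime) (hodd : Odd p)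
    (hn : p ≤ n) :
    ContractibleSpace (↥(geomReal (thetaComplex
      ((fun h => Quot.mk (rotRel p (n - p)) '' h) ''
        (cubeEdgesOn (Fin (n - p) ⊕ ZMod p) 2))))) :=
  theta_cube_quotient_contractible_general p n hp hodd
end
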